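/- arXiv:2509.02717 — 6 statements merged into one kernel-verified Lean document; each statement's English description precedes it below -/
import Mathlib

section
/- Let G = (V, E) be a finite connected graph with n vertices, fix any initial configuration η₀ ∈ {0,1}^V, and let ω = (ω(k))_{k≥1} be i.i.d. uniform directed edges driving the discrete-time voter model (η_k)_{k≥0}. Define p_ℓ = (1/(2|E|)) · #{directed edges (i,j) : η_ℓ(i) ≠ η_ℓ(j)}. Then E[∑_{ℓ=0}^∞ p_ℓ] ≤ n²/4. -/
open MeasureTheory ProbabilityTheory
open scoped ENNReal Classical

/-- The voter-model update map. -/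
def voterUpd {V : Type*} [DecidableEq V] (e : V × V) (η : V → Bool) : V → Bool :=
  Function.update η e.2 (η e.1)

/-- The discrete-time voter model driven by `η0` and a sequence of directed edges. -/
def voterProc {V : Type*} [DecidableEq V] (η0 : V → Bool) (ω : ℕ → V × V) : ℕ → V → Bool
  | 0 => η0
  | k + 1 => voterUpd (ω k) (voterProc η0 ω k)

/-- Number of directed edges whose endpoints disagree. -/
def numDisagree {V : Type*} [Fintype V] [DecidableEq V]
    (G : SimpleGraph V) [DecidableRel G.Adj] (η : V → Bool) : ℕ :=
  (Finset.univ.filter fun e : V × V => G.Adj e.1 e.2 ∧ η e.1 ≠ η e.2).card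

/-!
With `X` the number of voters holding opinion `true`, the potential `X (n - X) ≤ n² / 4` drops
on average by exactly `p_ℓ` at each step: an update along a disagreeing directed edge changes it
by `±(n - 2X) - 1`, and the two orientations of an edge contribute opposite signs. Since the
state at time `ℓ` depends only on the first `ℓ` edges, which are independent of the next one,
`E[potential(η_{ℓ+1})] + E[p_ℓ] = E[potential(η_ℓ)]`; telescoping bounds every partial sum of
`E[p_ℓ]` by the initial potential.
-/

open Finset

theorem ProbabilityTheory.IndepFun.lintegral_comp_eq_lintegral_sum {Ω β α : Type*}
    {mΩ : MeasurableSpace Ω} {μ : Measure Ω} [MeasurableSpace β] [Fintype α]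
    [MeasurableSpace α] [MeasurableSingletonClass α] {X : Ω → β} {Y : Ω → α}
    (hXY : IndepFun X Y μ) (hX : Measurable X) (hY : Measurable Y) (h : β → α → ℝ≥0∞)
    (hh : ∀ a, Measurable (h · a)) :
    ∫⁻ ω, h (X ω) (Y ω) ∂μ = ∫⁻ ω, ∑ a, μ (Y ⁻¹' {a}) * h (X ω) a ∂μ := by
  have hsplit : ∀ ω, h (X ω) (Y ω) = ∑ a, h (X ω) a * (Y ⁻¹' {a}).indicator 1 ω := by
    intro ω
    rw [Finset.sum_eq_single (Y ω) (fun a _ ha => by simp [Ne.symm ha]) (by simp)]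
    simp
  have hfactor : ∀ a, ∫⁻ ω, h (X ω) a * (Y ⁻¹' {a}).indicator 1 ω ∂μ
      = (∫⁻ ω, h (X ω) a ∂μ) * μ (Y ⁻¹' {a}) := by
    intro a
    rw [← lintegral_indicator_one (hY (measurableSet_singleton a))]
    exact lintegral_mul_eq_lintegral_mul_lintegral_of_indepFun ((hh a).comp hX)
      ((measurable_const.indicator (measurableSet_singleton a)).comp hY)
      (hXY.comp (hh a) (measurable_const.indicator (measurableSet_singleton a)))
  have hmeas : ∀ a, Measurable fun ω => h (X ω) a := fun a => (hh a).comp hX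
  have hmeas' : ∀ a, Measurable fun ω => h (X ω) a * (Y ⁻¹' {a}).indicator 1 ω := fun a =>
    (hmeas a).mul (measurable_const.indicator (hY (measurableSet_singleton a)))
  simp_rw [hsplit]
  rw [lintegral_finsetSum _ fun a _ => hmeas' a,
    lintegral_finsetSum _ fun a _ => (hmeas a).const_mul _]
  simp_rw [hfactor, lintegral_const_mul _ (hmeas _), mul_comm]

namespace VoterModel

section Dynamics

variable {V α : Type*} [Finite V] [DecidableEq V] [MeasurableSpace α] [Countable α]
  [MeasurableSingletonClass α] (f : α → V × V) (η0 : V → Bool)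

theorem measurable_voterProc_past (m : ℕ) :
    Measurable[⨆ k ∈ Set.Iio m, MeasurableSpace.comap (fun ω : ℕ → α => ω k) ‹_›]
      fun ω => voterProc η0 (fun i => f (ω i)) m := by
  induction m with
  | zero => exact measurable_const
  | succ m ih =>
    have hstep : Measurable fun p : α × (V → Bool) => voterUpd (f p.1) p.2 :=
      measurable_of_countable _
    refine hstep.comp (Measurable.prodMk ?_ ?_)
    · exact measurable_iff_comap_le.2 (le_iSup₂ (f := fun k (_ : k ∈ Set.Iio (m + 1)) =>
        MeasurableSpace.comap (fun ω : ℕ → α => ω k) ‹_›) m (by simp))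
    · exact ih.mono (biSup_mono fun k hk => (Set.mem_Iio.1 hk).trans m.lt_succ_self) le_rfl

theorem measurable_voterProc (m : ℕ) :
    Measurable fun ω : ℕ → α => voterProc η0 (fun i => f (ω i)) m :=
  (measurable_voterProc_past f η0 m).mono
    (iSup₂_le fun k _ => (measurable_pi_apply k).comap_le) le_rfl

theorem measurable_comp_voterProc {β : Type*} [MeasurableSpace β] (F : (V → Bool) → β)
    (m : ℕ) : Measurable fun ω : ℕ → α => F (voterProc η0 (fun i => f (ω i)) m) :=
  (measurable_of_countable F).comp (measurable_voterProc f η0 m)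

theorem indepFun_voterProc_apply {μ : Measure (ℕ → α)}
    (hindep : iIndepFun (fun k (ω : ℕ → α) => ω k) μ) (m : ℕ) :
    IndepFun (fun ω => voterProc η0 (fun i => f (ω i)) m) (fun ω => ω m) μ := by
  rw [iIndepFun_iff_iIndep] at hindep
  have hpast := indep_iSup_of_disjoint (fun k => (measurable_pi_apply k).comap_le) hindep
    (S := Set.Iio m) (T := {m}) (by simp)
  rw [IndepFun_iff_Indep]
  exact indep_of_indep_of_le_right
    (indep_of_indep_of_le_left hpast (measurable_voterProc_past f η0 m).comap_le)
    (le_iSup₂ (f := fun k (_ : k ∈ ({m} : Set ℕ)) =>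
      MeasurableSpace.comap (fun ω : ℕ → α => ω k) ‹_›) m rfl)

end Dynamics

theorem lintegral_voterProc_succ {V α : Type*} [Finite V] [DecidableEq V] [MeasurableSpace α]
    [Fintype α] [MeasurableSingletonClass α] (f : α → V × V) (η0 : V → Bool)
    {μ : Measure (ℕ → α)} (hindep : iIndepFun (fun k (ω : ℕ → α) => ω k) μ) {c : ℝ≥0∞}
    (hunif : ∀ k a, μ {ω | ω k = a} = c) (h : (V → Bool) → ℝ≥0∞) (m : ℕ) :
    ∫⁻ ω, h (voterProc η0 (fun i => f (ω i)) (m + 1)) ∂μ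
      = ∫⁻ ω, ∑ a, c * h (voterUpd (f a) (voterProc η0 (fun i => f (ω i)) m)) ∂μ := by
  simpa only [voterProc, Set.preimage, Set.mem_singleton_iff, hunif] using
    (indepFun_voterProc_apply f η0 hindep m).lintegral_comp_eq_lintegral_sum
      (measurable_voterProc f η0 m) (measurable_pi_apply m) (fun η a => h (voterUpd (f a) η))
      fun _ => measurable_of_countable _

section Potential

variable {V : Type*} [Fintype V]

def numTrue (η : V → Bool) : ℕ := ∑ v, (η v).toNat

def potential (η : V → Bool) : ℕ := numTrue η * (Fintype.card V - numTrue η)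

lemma numTrue_le_card (η : V → Bool) : numTrue η ≤ Fintype.card V := by
  simpa [numTrue] using sum_le_card_nsmul univ (fun v => (η v).toNat) 1 fun v _ => Bool.toNat_le _

lemma potential_le (η : V → Bool) : (potential η : ℝ) ≤ Fintype.card V ^ 2 / 4 := by
  obtain ⟨k, hk⟩ := Nat.exists_eq_add_of_le (numTrue_le_card η)
  rw [potential, hk, Nat.add_sub_cancel_left]
  push_cast
  nlinarith [sq_nonneg ((numTrue η : ℝ) - k)]

variable [DecidableEq V]

lemma numTrue_update (η : V → Bool) (y : V) (b : Bool) :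
    (numTrue (Function.update η y b) : ℤ) = numTrue η + b.toNat - (η y).toNat := by
  have h := sum_update_of_mem (mem_univ y) (Bool.toNat ∘ η) b.toNat
  have h' := add_sum_erase univ (Bool.toNat ∘ η) (mem_univ y)
  rw [← Function.comp_update, sdiff_singleton_eq_erase] at h
  simp only [numTrue, Function.comp_apply] at h h' ⊢
  omega

lemma potential_voterUpd (e : V × V) (η : V → Bool) :
    (potential (voterUpd e η) : ℤ) = potential η
      + ((η e.1).toNat - (η e.2).toNat) * (Fintype.card V - 2 * numTrue η)
      - if η e.1 = η e.2 then 0 else 1 := by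
  have hle := numTrue_le_card η
  have hle' := numTrue_le_card (voterUpd e η)
  have hupd := numTrue_update η e.2 (η e.1)
  simp only [potential, voterUpd] at *
  push_cast [hle, hle']
  rw [hupd]
  cases η e.1 <;> cases η e.2 <;> simp <;> ring

end Potential

section Graph

variable {V : Type*} [Fintype V] (G : SimpleGraph V) [DecidableRel G.Adj]

abbrev DirEdge := {e : V × V // G.Adj e.1 e.2}

def DirEdge.reverse : Equiv.Perm (DirEdge G) :=
  Function.Involutive.toPerm (fun e => ⟨e.1.swap, e.2.symm⟩) fun _ => rfl

lemma sum_dirEdge_fst_eq_snd {M : Type*} [AddCommMonoid M] (f : V → M) :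
    ∑ e : DirEdge G, f e.1.1 = ∑ e : DirEdge G, f e.1.2 :=
  Fintype.sum_equiv (DirEdge.reverse G) _ _ fun _ => rfl

lemma card_dirEdge : Fintype.card (DirEdge G) = 2 * #G.edgeFinset := by
  rw [Fintype.card_subtype, SimpleGraph.two_mul_card_edgeFinset]

variable [DecidableEq V]

lemma numDisagree_eq_sum (η : V → Bool) :
    numDisagree G η = ∑ e : DirEdge G, if η e.1.1 = η e.1.2 then 0 else 1 := by
  rw [numDisagree, ← sum_subtype (univ.filter fun e : V × V => G.Adj e.1 e.2)
    (fun e => by simp) (fun e : V × V => if η e.1 = η e.2 then 0 else 1), card_filter]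
  simp [sum_ite, filter_filter]

lemma sum_potential_voterUpd_add_numDisagree (η : V → Bool) :
    ∑ e : DirEdge G, potential (voterUpd e η) + numDisagree G η
      = Fintype.card (DirEdge G) * potential η := by
  have hdrift : ∑ e : DirEdge G, (((η e.1.1).toNat : ℤ) - (η e.1.2).toNat) = 0 := by
    rw [sum_sub_distrib, sub_eq_zero]
    exact sum_dirEdge_fst_eq_snd G fun v => ((η v).toNat : ℤ)
  zify
  simp only [potential_voterUpd, numDisagree_eq_sum, sum_add_distrib, sum_sub_distrib,
    ← sum_mul, hdrift]
  push_cast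
  simp

variable {G}

lemma sum_inv_mul_potential_voterUpd_add (hG : Fintype.card (DirEdge G) ≠ 0)
    (η : V → Bool) :
    ∑ e : DirEdge G, (Fintype.card (DirEdge G) : ℝ≥0∞)⁻¹ * potential (voterUpd e η)
      + numDisagree G η / Fintype.card (DirEdge G) = potential η := by
  have h := congrArg (Nat.cast : ℕ → ℝ≥0∞) (sum_potential_voterUpd_add_numDisagree G η)
  push_cast at h
  rw [← mul_sum, ENNReal.div_eq_inv_mul, ← mul_add, h, ← mul_assoc,
    ENNReal.inv_mul_cancel (by exact_mod_cast hG) (ENNReal.natCast_ne_top _), one_mul]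

variable [MeasurableSpace V] [MeasurableSingletonClass V] {μ : Measure (ℕ → DirEdge G)}

lemma lintegral_potential_succ_add (hG : Fintype.card (DirEdge G) ≠ 0)
    (hindep : iIndepFun (fun k (ω : ℕ → DirEdge G) => ω k) μ)
    (hunif : ∀ k e, μ {ω | ω k = e} = (Fintype.card (DirEdge G) : ℝ≥0∞)⁻¹) (η0 : V → Bool)
    (m : ℕ) :
    ∫⁻ ω, (potential (voterProc η0 (fun i => (ω i : V × V)) (m + 1)) : ℝ≥0∞) ∂μ
      + ∫⁻ ω, numDisagree G (voterProc η0 (fun i => (ω i : V × V)) m)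
          / Fintype.card (DirEdge G) ∂μ
      = ∫⁻ ω, (potential (voterProc η0 (fun i => (ω i : V × V)) m) : ℝ≥0∞) ∂μ := by
  rw [lintegral_voterProc_succ Subtype.val η0 hindep hunif (fun η => (potential η : ℝ≥0∞)),
    ← lintegral_add_left (measurable_comp_voterProc Subtype.val η0 (fun η =>
      ∑ e : DirEdge G, (Fintype.card (DirEdge G) : ℝ≥0∞)⁻¹ * potential (voterUpd e η)) m)]
  simp only [sum_inv_mul_potential_voterUpd_add hG]

lemma sum_range_lintegral_disagree_add_lintegral_potential [IsProbabilityMeasure μ]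
    (hG : Fintype.card (DirEdge G) ≠ 0)
    (hindep : iIndepFun (fun k (ω : ℕ → DirEdge G) => ω k) μ)
    (hunif : ∀ k e, μ {ω | ω k = e} = (Fintype.card (DirEdge G) : ℝ≥0∞)⁻¹) (η0 : V → Bool)
    (m : ℕ) :
    ∑ ℓ ∈ range m, ∫⁻ ω, numDisagree G (voterProc η0 (fun i => (ω i : V × V)) ℓ)
          / Fintype.card (DirEdge G) ∂μ
      + ∫⁻ ω, (potential (voterProc η0 (fun i => (ω i : V × V)) m) : ℝ≥0∞) ∂μ
      = potential η0 := by
  induction m with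
  | zero => simp [voterProc]
  | succ m ih =>
    rw [sum_range_succ, add_assoc, add_comm (∫⁻ _, _ ∂μ),
      lintegral_potential_succ_add hG hindep hunif, ih]

end Graph

end VoterModel

open VoterModel in
theorem stmt8_general {V : Type*} [Fintype V] [DecidableEq V]
    [MeasurableSpace V] [MeasurableSingletonClass V]
    (G : SimpleGraph V) [DecidableRel G.Adj]
    (η0 : V → Bool)
    (μω : Measure (ℕ → {e : V × V // G.Adj e.1 e.2})) [IsProbabilityMeasure μω]
    (hindep : iIndepFun (fun k ω => ω k) μω)
    (hunif : ∀ (k : ℕ) (e : {e : V × V // G.Adj e.1 e.2}),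
      μω {ω | ω k = e} = (2 * G.edgeFinset.card : ℝ≥0∞)⁻¹) :
    ∫⁻ ω, (∑' ℓ : ℕ, ENNReal.ofReal
        ((numDisagree G (voterProc η0 (fun i => ((ω i : V × V))) ℓ) : ℝ)
          / (2 * G.edgeFinset.card))) ∂μω
      ≤ ENNReal.ofReal ((Fintype.card V : ℝ) ^ 2 / 4) := by
  have hG : Fintype.card (DirEdge G) ≠ 0 := by
    have : Nonempty (DirEdge G) := ⟨(Measure.nonempty_of_neZero μω).some 0⟩
    exact Fintype.card_ne_zero
  rw [← Nat.cast_ofNat, ← Nat.cast_mul, ← card_dirEdge] at hunif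
  have hfrac : ∀ d : ℕ, ENNReal.ofReal ((d : ℝ) / (2 * G.edgeFinset.card))
      = d / Fintype.card (DirEdge G) := fun d => by
    rw [card_dirEdge] at hG ⊢
    rw [ENNReal.ofReal_div_of_pos (by exact_mod_cast Nat.pos_of_ne_zero hG)]
    norm_cast
  simp_rw [hfrac]
  rw [lintegral_tsum fun ℓ => (measurable_comp_voterProc Subtype.val η0
    (fun η => (numDisagree G η : ℝ≥0∞) / Fintype.card (DirEdge G)) ℓ).aemeasurable]
  refine ENNReal.tsum_le_of_sum_range_le fun m => ?_
  calc _ ≤ (potential η0 : ℝ≥0∞) := le_self_add.trans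
        (sum_range_lintegral_disagree_add_lintegral_potential hG hindep hunif η0 m).le
    _ ≤ ENNReal.ofReal ((Fintype.card V : ℝ) ^ 2 / 4) :=
        ENNReal.ofReal_natCast (potential η0) ▸ ENNReal.ofReal_le_ofReal (potential_le η0)

/-- For the voter model on a finite connected graph with `n` vertices driven
by i.i.d. uniform directed edges, with `p_ℓ` the fraction of disagreeing directed edges at
time `ℓ`, one has `E[∑_{ℓ=0}^∞ p_ℓ] ≤ n²/4`. -/
theorem stmt8 {V : Type*} [Fintype V] [DecidableEq V]
    [MeasurableSpace V] [MeasurableSingletonClass V]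
    (G : SimpleGraph V) [DecidableRel G.Adj] (hconn : G.Connected)
    (η0 : V → Bool)
    (μω : Measure (ℕ → {e : V × V // G.Adj e.1 e.2})) [IsProbabilityMeasure μω]
    (hindep : iIndepFun (fun k ω => ω k) μω)
    (hunif : ∀ (k : ℕ) (e : {e : V × V // G.Adj e.1 e.2}),
      μω {ω | ω k = e} = (2 * G.edgeFinset.card : ℝ≥0∞)⁻¹) :
    ∫⁻ ω, (∑' ℓ : ℕ, ENNReal.ofReal
        ((numDisagree G (voterProc η0 (fun i => ((ω i : V × V))) ℓ) : ℝ)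
          / (2 * G.edgeFinset.card))) ∂μω
      ≤ ENNReal.ofReal ((Fintype.card V : ℝ) ^ 2 / 4) :=
  stmt8_general G η0 μω hindep hunif
end

section
/- Let G = (V, E) be a finite connected graph with n vertices and maximum degree Δ. Let η₀ ∈ {0,1}^V have i.i.d. Bernoulli(p) entries for some p ∈ (0,1), independent of an i.i.d. sequence ω = (ω(k))_{k≥1} of uniform directed edges, and let f(η₀, ω) ∈ {0,1} denote the consensus opinion of the discrete-time voter model driven by (η₀, ω). For ℓ ≥ 1, let ω_{ℓ↔ℓ+1} denote the sequence obtained from ω by swapping its ℓ-th and (ℓ+1)-th entries. Then ∑_{ℓ=1}^∞ P(f(η₀, ω) ≠ f(η₀, ω_{ℓ↔ℓ+1})) ≤ 3nΔ/|E|. -/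
open MeasureTheory ProbabilityTheory
open scoped ENNReal Classical

/-- The consensus opinion of the voter model: `true` iff the all-ones configuration is
eventually reached (the all-ones state is absorbing; on a finite connected graph, driven by
i.i.d. uniform edges, some constant configuration is a.s. eventually reached, so this a.s.
coincides with the eventual constant value). -/
noncomputable def consensus {V : Type*} [DecidableEq V]
    (η0 : V → Bool) (ω : ℕ → V × V) : Bool :=
  if ∃ k : ℕ, ∀ v : V, voterProc η0 ω k v = true then true else false

/-- The sequence obtained from `ω` by swapping its `ℓ`-th and `(ℓ+1)`-th entries. -/
def swapSeq {E : Type*} (ℓ : ℕ) (ω : ℕ → E) : ℕ → E :=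
  ω ∘ (Equiv.swap ℓ (ℓ + 1))


/-!
The bound holds for every fixed initial configuration `c`; write `T = 2|E|` for the number of
directed edges and `D(ξ)` for the number of discordant directed edges of `ξ`. If exchanging the
updates `e = ω ℓ` and `f = ω (ℓ + 1)` changes the consensus, then `e` and `f` do not commute on
`ξ = η_ℓ`: they interact (share a head, or the head of one is the tail of the other) and one of
them is discordant, which leaves at most `6 Δ D(ξ)` pairs. Moreover the xor of the two
continuations is itself a voter process, started from at most two ones, that never dies out;
as the number of ones is a martingale and the process a.s. reaches consensus, this has
probability at most `2 / n`. Finally, with `N` the number of ones, `E[N(η_ℓ)²]` increases by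
`E[D(η_ℓ)] / T` per step while `N² ≤ n N` and `E[N(η_ℓ)]` is constant, so
`∑ ℓ, E[D(η_ℓ)] / T ≤ n² / 4`. Altogether the sum is at most
`6 Δ · T⁻² · (2 / n) · T · n² / 4 = 3 n Δ / T`.
-/

namespace VoterSwap

section Sequences

variable {α : Type*}

def prefixWord (m : ℕ) (θ : ℕ → α) : Fin m → α := fun i => θ i

def shiftSeq (m : ℕ) (θ : ℕ → α) : ℕ → α := fun i => θ (m + i)

@[simp]
lemma shiftSeq_zero (θ : ℕ → α) : shiftSeq 0 θ = θ := by
  funext i; simp [shiftSeq]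

lemma prefixWord_succ (m : ℕ) (θ : ℕ → α) :
    prefixWord (m + 1) θ = Fin.snoc (prefixWord m θ) (θ m) := by
  funext i
  refine Fin.lastCases ?_ (fun j => ?_) i <;> simp [prefixWord]

lemma shiftSeq_swapSeq (ω : ℕ → α) {ℓ J : ℕ} (h : ℓ + 2 ≤ J) :
    shiftSeq J (swapSeq ℓ ω) = shiftSeq J ω := by
  funext i
  simp [shiftSeq, swapSeq, Equiv.swap_apply_of_ne_of_ne (by omega : J + i ≠ ℓ)
    (by omega : J + i ≠ ℓ + 1)]

end Sequences

section UniformIID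

variable {α : Type*} [MeasurableSpace α]

lemma nonempty_of_isProbabilityMeasure_seq (μ : Measure (ℕ → α)) [IsProbabilityMeasure μ] :
    Nonempty α :=
  ⟨(nonempty_of_isProbabilityMeasure μ).some 0⟩

lemma measurable_prefixWord (m : ℕ) : Measurable (prefixWord (α := α) m) :=
  measurable_pi_lambda _ fun _ => measurable_pi_apply _

lemma measurable_shiftSeq (m : ℕ) : Measurable (shiftSeq (α := α) m) :=
  measurable_pi_lambda _ fun _ => measurable_pi_apply _

lemma measurableSet_prefixWord_preimage [Countable α] [MeasurableSingletonClass α] (m : ℕ)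
    (A : Set (Fin m → α)) :
    MeasurableSet (prefixWord m ⁻¹' A) :=
  measurable_prefixWord m A.to_countable.measurableSet

variable [Fintype α] [MeasurableSingletonClass α] {μ : Measure (ℕ → α)} {m L : ℕ}
  (hindep : iIndepFun (fun k θ => θ k) μ)
  (hunif : ∀ k a, μ {θ | θ k = a} = (Fintype.card α : ℝ≥0∞)⁻¹)
include hindep hunif

lemma measure_prefixWord_preimage_singleton (w : Fin m → α) :
    μ (prefixWord m ⁻¹' {w}) = (Fintype.card α : ℝ≥0∞)⁻¹ ^ m := by
  have h := (hindep.precomp Fin.val_injective).measure_inter_preimage_eq_mul Finset.univ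
    (sets := fun i => {w i}) (fun _ _ => measurableSet_singleton _)
  have hset : prefixWord m ⁻¹' {w} = ⋂ i ∈ (Finset.univ : Finset (Fin m)),
      (fun θ : ℕ → α => θ i) ⁻¹' {w i} := by
    ext θ; simp [prefixWord, funext_iff]
  rw [hset, h]
  simp only [Set.preimage, Set.mem_singleton_iff, hunif, Finset.prod_const, Finset.card_univ,
    Fintype.card_fin]

lemma measure_prefixWord_preimage (A : Finset (Fin m → α)) :
    μ (prefixWord m ⁻¹' A) = A.card * (Fintype.card α : ℝ≥0∞)⁻¹ ^ m := by
  rw [← sum_measure_preimage_singleton A fun w _ => measurableSet_prefixWord_preimage m {w}]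
  simp [measure_prefixWord_preimage_singleton hindep hunif]

variable [IsProbabilityMeasure μ]

-- `μ` is the infinite product of its common one-dimensional marginal, which is shift invariant.
lemma map_shiftSeq : μ.map (shiftSeq m) = μ := by
  set P := μ.map (fun θ => θ 0)
  have hlaw : ∀ k, μ.map (fun θ => θ k) = P := fun k => by
    refine Measure.ext_of_singleton fun a => ?_
    rw [Measure.map_apply (measurable_pi_apply k) (measurableSet_singleton a),
      Measure.map_apply (measurable_pi_apply 0) (measurableSet_singleton a)]
    exact (hunif k a).trans (hunif 0 a).symm
  have hμ : μ = Measure.infinitePi (fun _ : ℕ => P) := by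
    have := hindep.map_fun_eq_infinitePi_map (fun k => measurable_pi_apply k)
    simpa [hlaw] using this
  have : IsProbabilityMeasure P :=
    Measure.isProbabilityMeasure_map (measurable_pi_apply 0).aemeasurable
  rw [hμ]
  exact Measure.map_infinitePi_infinitePi_of_inj (add_right_injective m)

lemma measure_prefixWord_preimage_inter_shiftSeq (A : Set (Fin m → α))
    {B : Set (ℕ → α)} (hB : MeasurableSet B) :
    μ (prefixWord m ⁻¹' A ∩ shiftSeq m ⁻¹' B) = μ (prefixWord m ⁻¹' A) * μ B := by
  let coord : ℕ → MeasurableSpace (ℕ → α) := fun k => MeasurableSpace.comap (fun θ => θ k) ‹_›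
  have hind : Indep (⨆ k ∈ Set.Iio m, coord k) (⨆ k ∈ Set.Ici m, coord k) μ :=
    indep_iSup_of_disjoint (fun k => (measurable_pi_apply k).comap_le)
      ((iIndepFun_iff_iIndep _ _ _).1 hindep) (Set.Iio_disjoint_Ici le_rfl)
  have hpre : Measurable[⨆ k ∈ Set.Iio m, coord k] (prefixWord m) :=
    @measurable_pi_lambda _ _ _ (⨆ k ∈ Set.Iio m, coord k) _ _ fun i => Measurable.of_comap_le
      (le_iSup₂ (f := fun k (_ : k ∈ Set.Iio m) => coord k) (i : ℕ) i.2)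
  have hshift : Measurable[⨆ k ∈ Set.Ici m, coord k] (shiftSeq m) :=
    @measurable_pi_lambda _ _ _ (⨆ k ∈ Set.Ici m, coord k) _ _ fun i => Measurable.of_comap_le
      (le_iSup₂ (f := fun k (_ : k ∈ Set.Ici m) => coord k) (m + i) (Nat.le_add_right m i))
  rw [(Indep_iff _ _ _).1 hind _ _ (hpre A.to_countable.measurableSet) (hshift hB),
    ← Measure.map_apply (measurable_shiftSeq m) hB, map_shiftSeq hindep hunif]

-- The blocks of length `L` are i.i.d., each equal to `u` with probability `card α ^ (-L)`.
lemma measure_forall_block_ne_eq_zero (u : Fin L → α) :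
    μ {θ | ∀ j, prefixWord L (shiftSeq (j * L) θ) ≠ u} = 0 := by
  set q : ℝ≥0∞ := (Fintype.card α : ℝ≥0∞)⁻¹ ^ L
  let avoid : ℕ → Set (ℕ → α) := fun m => ⋂ j < m, (prefixWord L ∘ shiftSeq (j * L)) ⁻¹' {u}ᶜ
  have hmeas : ∀ m, MeasurableSet (avoid m) := fun m =>
    MeasurableSet.iInter fun j => MeasurableSet.iInter fun _ =>
      ((measurable_prefixWord L).comp (measurable_shiftSeq _)) (Set.to_countable _).measurableSet
  have hsucc : ∀ m, avoid (m + 1) = prefixWord L ⁻¹' {u}ᶜ ∩ shiftSeq L ⁻¹' avoid m := by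
    intro m
    ext θ
    have hblock : ∀ j, shiftSeq ((j + 1) * L) θ = shiftSeq (j * L) (shiftSeq L θ) := fun j => by
      funext i; simp only [shiftSeq]; ring_nf
    simp only [avoid, Set.mem_inter_iff, Set.mem_iInter, Set.mem_preimage, Function.comp_apply,
      Nat.forall_lt_succ_left, zero_mul, shiftSeq_zero, hblock]
  have hmeasure : ∀ m, μ (avoid m) = (1 - q) ^ m := by
    intro m
    induction m with
    | zero => simp [avoid]
    | succ m ih =>
      rw [hsucc, measure_prefixWord_preimage_inter_shiftSeq hindep hunif _ (hmeas m),
        Set.preimage_compl, prob_compl_eq_one_sub (measurableSet_prefixWord_preimage L _),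
        measure_prefixWord_preimage_singleton hindep hunif, ih, pow_succ']
  have hq : 1 - q < 1 := ENNReal.sub_lt_self ENNReal.one_ne_top one_ne_zero
    (pow_ne_zero _ (ENNReal.inv_ne_zero.2 (ENNReal.natCast_ne_top _)))
  refine le_antisymm (ge_of_tendsto (ENNReal.tendsto_pow_atTop_nhds_zero_of_lt_one hq)
    (Filter.Eventually.of_forall fun m => ?_)) bot_le
  rw [← hmeasure]
  exact measure_mono fun θ hθ => by simpa [avoid] using fun j _ => hθ j

end UniformIID

section Dynamics

variable {V : Type*}

def Interact (e f : V × V) : Prop := e.2 = f.2 ∨ e.2 = f.1 ∨ e.1 = f.2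

lemma interact_comm {e f : V × V} : Interact e f ↔ Interact f e := by
  unfold Interact; tauto

variable [DecidableEq V]

def runWord (η : V → Bool) (l : List (V × V)) : V → Bool :=
  l.foldl (fun η e => voterUpd e η) η

@[simp]
lemma runWord_nil (η : V → Bool) : runWord η [] = η := rfl

@[simp]
lemma runWord_cons (η : V → Bool) (e : V × V) (l : List (V × V)) :
    runWord η (e :: l) = runWord (voterUpd e η) l := rfl

lemma runWord_append (η : V → Bool) (l l' : List (V × V)) :
    runWord η (l ++ l') = runWord (runWord η l) l' :=
  List.foldl_append

lemma runWord_concat (η : V → Bool) (l : List (V × V)) (e : V × V) :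
    runWord η (l.concat e) = voterUpd e (runWord η l) := by
  rw [List.concat_eq_append, runWord_append]; rfl

lemma voterProc_eq_runWord (η : V → Bool) (ω : ℕ → V × V) (k : ℕ) :
    voterProc η ω k = runWord η (List.ofFn fun i : Fin k => ω i) := by
  induction k with
  | zero => rfl
  | succ k ih =>
    rw [List.ofFn_succ', runWord_concat]
    simp only [Fin.val_castSucc, Fin.val_last, ← ih]
    rfl

lemma voterProc_add (η : V → Bool) (ω : ℕ → V × V) (a k : ℕ) :
    voterProc η ω (a + k) = voterProc (voterProc η ω a) (shiftSeq a ω) k := by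
  induction k with
  | zero => rfl
  | succ k ih => exact congrArg (voterUpd (ω (a + k))) ih

lemma voterProc_congr {η : V → Bool} {ω ω' : ℕ → V × V} {k : ℕ} (h : ∀ i < k, ω i = ω' i) :
    voterProc η ω k = voterProc η ω' k := by
  rw [voterProc_eq_runWord, voterProc_eq_runWord]
  congr 2
  funext i
  exact h i i.2

lemma voterUpd_apply (e : V × V) (η : V → Bool) (v : V) :
    voterUpd e η v = if v = e.2 then η e.1 else η v :=
  Function.update_apply ..

lemma voterUpd_of_eq {e : V × V} {η : V → Bool} (h : η e.1 = η e.2) : voterUpd e η = η := by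
  rw [voterUpd, h, Function.update_eq_self]

lemma voterProc_xor (η η' : V → Bool) (ω : ℕ → V × V) (k : ℕ) :
    voterProc (fun v => xor (η v) (η' v)) ω k =
      fun v => xor (voterProc η ω k v) (voterProc η' ω k v) := by
  induction k with
  | zero => rfl
  | succ k ih =>
    funext v
    simp only [voterProc, voterUpd_apply, ih]
    split_ifs <;> rfl

lemma voterProc_allTrue_of_le {η : V → Bool} {ω : ℕ → V × V} {k k' : ℕ} (hk : k ≤ k')
    (h : ∀ v, voterProc η ω k v = true) : ∀ v, voterProc η ω k' v = true := by
  induction k', hk using Nat.le_induction with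
  | base => exact h
  | succ k' _ ih => intro v; rw [voterProc, voterUpd_apply]; split_ifs <;> apply ih

lemma consensus_eq_consensus_shiftSeq (η : V → Bool) (ω : ℕ → V × V) (J : ℕ) :
    consensus η ω = consensus (voterProc η ω J) (shiftSeq J ω) := by
  have key : (∃ k, ∀ v, voterProc η ω k v = true) ↔
      ∃ k, ∀ v, voterProc (voterProc η ω J) (shiftSeq J ω) k v = true := by
    simp only [← voterProc_add]
    exact ⟨fun ⟨k, hk⟩ => ⟨k, voterProc_allTrue_of_le (Nat.le_add_left k J) hk⟩,
      fun ⟨k, hk⟩ => ⟨J + k, hk⟩⟩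
  simp only [consensus, key]

lemma voterProc_swapSeq_add_two (η : V → Bool) (ω : ℕ → V × V) (ℓ : ℕ) :
    voterProc η (swapSeq ℓ ω) (ℓ + 2) =
      voterUpd (ω ℓ) (voterUpd (ω (ℓ + 1)) (voterProc η ω ℓ)) := by
  have hpre : voterProc η (swapSeq ℓ ω) ℓ = voterProc η ω ℓ := voterProc_congr fun i hi => by
    simp [swapSeq, Equiv.swap_apply_of_ne_of_ne hi.ne (by omega : i ≠ ℓ + 1)]
  change voterUpd (swapSeq ℓ ω (ℓ + 1)) (voterUpd (swapSeq ℓ ω ℓ) (voterProc η (swapSeq ℓ ω) ℓ)) = _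
  rw [hpre]
  simp [swapSeq]

def swapDiscrepancy (ξ : V → Bool) (e f : V × V) : V → Bool :=
  fun v => xor (voterUpd f (voterUpd e ξ) v) (voterUpd e (voterUpd f ξ) v)

lemma survives_of_consensus_ne_swapSeq {η : V → Bool} {ω : ℕ → V × V} {ℓ : ℕ}
    (h : consensus η ω ≠ consensus η (swapSeq ℓ ω)) (k : ℕ) :
    ∃ v, voterProc (swapDiscrepancy (voterProc η ω ℓ) (ω ℓ) (ω (ℓ + 1)))
      (shiftSeq (ℓ + 2) ω) k v = true := by
  by_contra! hk
  apply h
  have hJ : ℓ + 2 ≤ ℓ + 2 + k := Nat.le_add_right _ _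
  have hagree : voterProc η ω (ℓ + 2 + k) = voterProc η (swapSeq ℓ ω) (ℓ + 2 + k) := by
    rw [voterProc_add _ _ (ℓ + 2), voterProc_add _ (swapSeq ℓ ω) (ℓ + 2), voterProc_swapSeq_add_two,
      shiftSeq_swapSeq ω le_rfl]
    funext v
    have hv := hk v
    unfold swapDiscrepancy at hv
    rw [voterProc_xor] at hv
    simp only [ne_eq, Bool.not_eq_true, bne_eq_false_iff_eq] at hv
    exact hv
  rw [consensus_eq_consensus_shiftSeq η ω (ℓ + 2 + k),
    consensus_eq_consensus_shiftSeq η (swapSeq ℓ ω) (ℓ + 2 + k), hagree, shiftSeq_swapSeq ω hJ]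

lemma voterUpd_comm_of_not_interact {e f : V × V} (h : ¬ Interact e f) (ξ : V → Bool) :
    voterUpd f (voterUpd e ξ) = voterUpd e (voterUpd f ξ) := by
  unfold Interact at h
  push Not at h
  funext v
  simp only [voterUpd_apply]
  split_ifs <;> simp_all

lemma interact_and_discordant_of_voterUpd_comm_ne {e f : V × V} {ξ : V → Bool}
    (h : voterUpd f (voterUpd e ξ) ≠ voterUpd e (voterUpd f ξ)) :
    Interact e f ∧ (ξ e.1 ≠ ξ e.2 ∨ ξ f.1 ≠ ξ f.2) := by
  refine ⟨not_not.1 fun hef => h (voterUpd_comm_of_not_interact hef ξ), ?_⟩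
  by_contra! hconc
  exact h (by rw [voterUpd_of_eq hconc.1, voterUpd_of_eq hconc.2, voterUpd_of_eq hconc.1])

lemma swapDiscrepancy_of_ne {ξ : V → Bool} {e f : V × V} {v : V} (he : v ≠ e.2) (hf : v ≠ f.2) :
    swapDiscrepancy ξ e f v = false := by
  simp [swapDiscrepancy, voterUpd_apply, he, hf]

lemma voterUpd_comm_ne_of_swapDiscrepancy {ξ : V → Bool} {e f : V × V} {v : V}
    (h : swapDiscrepancy ξ e f v = true) :
    voterUpd f (voterUpd e ξ) ≠ voterUpd e (voterUpd f ξ) := fun hcomm => by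
  simp [swapDiscrepancy, hcomm] at h

end Dynamics

section Counting

variable {V : Type*} [Fintype V]

def numOnes (η : V → Bool) : ℕ := ∑ v, (η v).toNat

lemma numOnes_le (η : V → Bool) : numOnes η ≤ Fintype.card V := by
  simpa [numOnes] using Finset.sum_le_sum fun v (_ : v ∈ Finset.univ) => Bool.toNat_le (η v)

lemma numOnes_const_true : numOnes (fun _ : V => true) = Fintype.card V := by
  simp [numOnes]

variable [DecidableEq V]

lemma numOnes_update (η : V → Bool) (y : V) (b : Bool) :
    (numOnes (Function.update η y b) : ℤ) = numOnes η + b.toNat - (η y).toNat := by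
  have hupd : numOnes (Function.update η y b) = b.toNat + ∑ v ∈ Finset.univ \ {y}, (η v).toNat := by
    simp only [numOnes, Function.apply_update (fun _ => Bool.toNat)]
    exact Finset.sum_update_of_mem (Finset.mem_univ y) _ _
  have hself : numOnes η = (η y).toNat + ∑ v ∈ Finset.univ \ {y}, (η v).toNat :=
    Finset.sum_eq_add_sum_sdiff_singleton_of_mem (Finset.mem_univ y) _
  rw [hupd, hself]
  push_cast
  ring

lemma numOnes_voterUpd (e : V × V) (ξ : V → Bool) :
    (numOnes (voterUpd e ξ) : ℤ) = numOnes ξ + ((ξ e.1).toNat - (ξ e.2).toNat) := by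
  rw [voterUpd, numOnes_update]; ring

lemma numOnes_swapDiscrepancy_le (ξ : V → Bool) (e f : V × V) :
    numOnes (swapDiscrepancy ξ e f) ≤ 2 := by
  have hsupp : ∀ v ∉ ({e.2, f.2} : Finset V), (swapDiscrepancy ξ e f v).toNat = 0 := by
    intro v hv
    simp only [Finset.mem_insert, Finset.mem_singleton, not_or] at hv
    rw [swapDiscrepancy_of_ne hv.1 hv.2, Bool.toNat_false]
  calc numOnes (swapDiscrepancy ξ e f)
      = ∑ v ∈ {e.2, f.2}, (swapDiscrepancy ξ e f v).toNat :=
        (Finset.sum_subset (Finset.subset_univ _) fun v _ hv => hsupp v hv).symm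
    _ ≤ ∑ v ∈ ({e.2, f.2} : Finset V), 1 := Finset.sum_le_sum fun v _ => Bool.toNat_le _
    _ ≤ 2 := by simpa using Finset.card_le_two

end Counting

section Graph

variable {V : Type*} (G : SimpleGraph V)

abbrev DirEdge : Type _ := {e : V × V // G.Adj e.1 e.2}

def DirEdge.reverse : DirEdge G ≃ DirEdge G :=
  (Equiv.prodComm V V).subtypeEquiv fun e => G.adj_comm e.1 e.2

variable {G}

lemma runWord_darts [DecidableEq V] {x y : V} (p : G.Walk x y) {ξ : V → Bool} {b : Bool}
    (hx : ξ x = b) :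
    runWord ξ (p.darts.map SimpleGraph.Dart.toProd) y = b ∧
      ∀ z, ξ z = b → runWord ξ (p.darts.map SimpleGraph.Dart.toProd) z = b := by
  induction p generalizing ξ with
  | nil => exact ⟨hx, fun _ h => h⟩
  | @cons u v w huv p ih =>
    have hkeep : ∀ z, ξ z = b → voterUpd (u, v) ξ z = b := fun z hz => by
      rw [voterUpd_apply]; split_ifs <;> assumption
    obtain ⟨hy, hmono⟩ := ih (ξ := voterUpd (u, v) ξ) (by simp [voterUpd_apply, hx])
    simpa using ⟨hy, fun z hz => hmono z (hkeep z hz)⟩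

-- Concatenate walks from a root `r` to every vertex: each update along them copies the opinion
-- of `r`.
lemma exists_synchronizing_word [Fintype V] [DecidableEq V] (hconn : G.Connected) :
    ∃ (L : ℕ) (u : Fin L → DirEdge G), ∀ ξ : V → Bool,
      ∃ b, runWord ξ (List.ofFn fun i => (u i).1) = fun _ => b := by
  obtain ⟨r⟩ := hconn.nonempty
  let walkWord : V → List (DirEdge G) := fun v =>
    (hconn.preconnected r v).some.darts.map fun d => ⟨d.toProd, d.adj⟩
  have key : ∀ (vs : List V) (ξ : V → Bool) (b : Bool), ξ r = b →
      (∀ z, ξ z = b → runWord ξ ((vs.flatMap walkWord).map Subtype.val) z = b) ∧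
        ∀ v ∈ vs, runWord ξ ((vs.flatMap walkWord).map Subtype.val) v = b := by
    intro vs
    induction vs with
    | nil => exact fun ξ b _ => ⟨fun _ h => h, by simp⟩
    | cons v vs ih =>
      intro ξ b hr
      obtain ⟨hv, hmono⟩ := runWord_darts (hconn.preconnected r v).some hr
      have hword : (walkWord v).map Subtype.val =
          (hconn.preconnected r v).some.darts.map SimpleGraph.Dart.toProd := by
        simp [walkWord]
      obtain ⟨hmono', hvs⟩ := ih _ b (hmono r hr)
      simp only [List.flatMap_cons, List.map_append, runWord_append, hword, List.mem_cons,
        forall_eq_or_imp]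
      exact ⟨fun z hz => hmono' z (hmono z hz), hmono' v hv, hvs⟩
  set l := Finset.univ.toList.flatMap walkWord
  have hl : (List.ofFn fun i => (l.get i).1) = l.map Subtype.val := by
    simp
  refine ⟨l.length, l.get, fun ξ => ⟨ξ r, funext fun v => ?_⟩⟩
  rw [hl]
  exact (key _ ξ _ rfl).2 v (Finset.mem_toList.2 (Finset.mem_univ v))

variable [Fintype V] [DecidableRel G.Adj]

lemma card_dirEdge : Fintype.card (DirEdge G) = 2 * G.edgeFinset.card := by
  rw [← SimpleGraph.dart_card_eq_twice_card_edges]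
  exact Fintype.card_congr
    { toFun := fun e => ⟨e.1, e.2⟩, invFun := fun d => ⟨d.toProd, d.adj⟩,
      left_inv := fun _ => rfl, right_inv := fun _ => rfl }

lemma card_dirEdge_ne_zero [Nonempty (DirEdge G)] : (Fintype.card (DirEdge G) : ℝ≥0∞) ≠ 0 := by
  simp [Fintype.card_ne_zero]

variable (G) in
def numDiscordant (ξ : V → Bool) : ℕ := Finset.card {e : DirEdge G | ξ e.1.1 ≠ ξ e.1.2}

lemma sum_toNat_fst_eq_sum_toNat_snd (ξ : V → Bool) :
    ∑ e : DirEdge G, ((ξ e.1.1).toNat : ℤ) = ∑ e : DirEdge G, ((ξ e.1.2).toNat : ℤ) :=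
  Equiv.sum_comp (DirEdge.reverse G) fun e => ((ξ e.1.2).toNat : ℤ)

lemma card_filter_fst_eq_le (u : V) : Finset.card {f : DirEdge G | f.1.1 = u} ≤ G.maxDegree :=
  calc Finset.card {f : DirEdge G | f.1.1 = u}
      ≤ (G.neighborFinset u).card := by
        refine Finset.card_le_card_of_injOn (fun f => f.1.2) (fun f hf => ?_)
          fun f hf f' hf' h => ?_
        · simp only [Finset.coe_filter, Finset.mem_univ, true_and, Set.mem_ofPred_eq] at hf
          simpa [← hf] using f.2
        · simp only [Finset.coe_filter, Finset.mem_univ, true_and, Set.mem_ofPred_eq] at hf hf'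
          exact Subtype.ext (Prod.ext (hf.trans hf'.symm) h)
    _ ≤ G.maxDegree := G.degree_le_maxDegree u

lemma card_filter_snd_eq_le (u : V) : Finset.card {f : DirEdge G | f.1.2 = u} ≤ G.maxDegree :=
  (Finset.card_equiv (DirEdge.reverse G) fun _ => by simp; rfl).trans_le
    (card_filter_fst_eq_le u)

lemma card_interact_le (e : DirEdge G) :
    Finset.card {f : DirEdge G | Interact e.1 f.1} ≤ 3 * G.maxDegree := by
  have hsub : ({f : DirEdge G | Interact e.1 f.1} : Finset _) ⊆
      ({f : DirEdge G | f.1.2 = e.1.2} : Finset _) ∪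
        (({f : DirEdge G | f.1.1 = e.1.2} : Finset _) ∪
          ({f : DirEdge G | f.1.2 = e.1.1} : Finset _)) := by
    intro f hf
    simp only [Finset.mem_union, Finset.mem_filter, Finset.mem_univ, true_and]
    rcases (Finset.mem_filter.1 hf).2 with h | h | h
    · exact Or.inl h.symm
    · exact Or.inr (Or.inl h.symm)
    · exact Or.inr (Or.inr h.symm)
  calc _ ≤ _ := Finset.card_le_card hsub
    _ ≤ _ := (Finset.card_union_le _ _).trans (Nat.add_le_add_left (Finset.card_union_le _ _) _)
    _ ≤ 3 * G.maxDegree := by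
      linarith [card_filter_snd_eq_le (G := G) e.1.2, card_filter_fst_eq_le (G := G) e.1.2,
        card_filter_snd_eq_le (G := G) e.1.1]

lemma card_discordant_interact_le (ξ : V → Bool) :
    Finset.card {p : DirEdge G × DirEdge G | ξ p.1.1.1 ≠ ξ p.1.1.2 ∧ Interact p.1.1 p.2.1} ≤
      3 * G.maxDegree * numDiscordant G ξ := by
  rw [Finset.card_filter, Fintype.sum_prod_type]
  calc ∑ e : DirEdge G, ∑ f : DirEdge G, (if ξ e.1.1 ≠ ξ e.1.2 ∧ Interact e.1 f.1 then 1 else 0)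
      ≤ ∑ e : DirEdge G, if ξ e.1.1 ≠ ξ e.1.2 then 3 * G.maxDegree else 0 := by
        refine Finset.sum_le_sum fun e _ => ?_
        split_ifs with he
        · simpa [he, Finset.sum_boole] using card_interact_le e
        · simp [he]
    _ = 3 * G.maxDegree * numDiscordant G ξ := by
        rw [Finset.sum_ite, Finset.sum_const_zero, add_zero, Finset.sum_const, smul_eq_mul,
          numDiscordant, mul_comm]

variable [DecidableEq V]

lemma sum_numOnes_voterUpd (ξ : V → Bool) :
    ∑ e : DirEdge G, numOnes (voterUpd e.1 ξ) = Fintype.card (DirEdge G) * numOnes ξ := by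
  zify
  simp only [numOnes_voterUpd, Finset.sum_add_distrib, Finset.sum_sub_distrib,
    sum_toNat_fst_eq_sum_toNat_snd, sub_self, add_zero, Finset.sum_const, Finset.card_univ,
    nsmul_eq_mul]

lemma sum_numOnes_voterUpd_sq (ξ : V → Bool) :
    ∑ e : DirEdge G, numOnes (voterUpd e.1 ξ) ^ 2 =
      Fintype.card (DirEdge G) * numOnes ξ ^ 2 + numDiscordant G ξ := by
  have hsq : ∀ a b : Bool, ((a.toNat : ℤ) - b.toNat) ^ 2 = if a ≠ b then 1 else 0 := by decide
  zify
  simp only [numOnes_voterUpd, add_sq, Finset.sum_add_distrib, ← Finset.mul_sum,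
    Finset.sum_sub_distrib, sum_toNat_fst_eq_sum_toNat_snd, sub_self, mul_zero, add_zero, hsq,
    Finset.sum_boole, numDiscordant, Finset.sum_const, Finset.card_univ, nsmul_eq_mul]

lemma card_voterUpd_comm_ne_le (ξ : V → Bool) :
    Finset.card {p : DirEdge G × DirEdge G |
        voterUpd p.2.1 (voterUpd p.1.1 ξ) ≠ voterUpd p.1.1 (voterUpd p.2.1 ξ)} ≤
      6 * G.maxDegree * numDiscordant G ξ := by
  set A : Finset (DirEdge G × DirEdge G) := {p | ξ p.1.1.1 ≠ ξ p.1.1.2 ∧ Interact p.1.1 p.2.1}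
  set B : Finset (DirEdge G × DirEdge G) := {p | ξ p.2.1.1 ≠ ξ p.2.1.2 ∧ Interact p.2.1 p.1.1}
  have hBA : B.card = A.card := Finset.card_equiv (Equiv.prodComm _ _) fun p => by simp [A, B]
  have hsub : ({p : DirEdge G × DirEdge G |
      voterUpd p.2.1 (voterUpd p.1.1 ξ) ≠ voterUpd p.1.1 (voterUpd p.2.1 ξ)} : Finset _) ⊆
        A ∪ B := by
    intro p hp
    obtain ⟨hint, hdisc | hdisc⟩ :=
      interact_and_discordant_of_voterUpd_comm_ne (Finset.mem_filter.1 hp).2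
    · exact Finset.mem_union_left _ (Finset.mem_filter.2 ⟨Finset.mem_univ _, hdisc, hint⟩)
    · exact Finset.mem_union_right _
        (Finset.mem_filter.2 ⟨Finset.mem_univ _, hdisc, interact_comm.1 hint⟩)
  calc _ ≤ (A ∪ B).card := Finset.card_le_card hsub
    _ ≤ A.card + B.card := Finset.card_union_le _ _
    _ ≤ 6 * G.maxDegree * numDiscordant G ξ := by
      linarith [card_discordant_interact_le (G := G) ξ]

end Graph

section Mean

variable {V : Type*} [Fintype V] [DecidableEq V] (G : SimpleGraph V) [DecidableRel G.Adj]

noncomputable def voterMean (η : V → Bool) (k : ℕ) (F : (V → Bool) → ℝ≥0∞) : ℝ≥0∞ :=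
  (Fintype.card (DirEdge G) : ℝ≥0∞)⁻¹ ^ k *
    ∑ w : Fin k → DirEdge G, F (runWord η (List.ofFn fun i => (w i).1))

noncomputable def stepMean (F : (V → Bool) → ℝ≥0∞) (ξ : V → Bool) : ℝ≥0∞ :=
  (Fintype.card (DirEdge G) : ℝ≥0∞)⁻¹ * ∑ e : DirEdge G, F (voterUpd e.1 ξ)

variable {G}

lemma sum_words_succ (η : V → Bool) (k : ℕ) (F : (V → Bool) → ℝ≥0∞) :
    ∑ w : Fin (k + 1) → DirEdge G, F (runWord η (List.ofFn fun i => (w i).1)) =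
      ∑ w : Fin k → DirEdge G, ∑ e : DirEdge G,
        F (voterUpd e.1 (runWord η (List.ofFn fun i => (w i).1))) := by
  rw [← (Fin.snocEquiv fun _ => DirEdge G).sum_comp, Fintype.sum_prod_type, Finset.sum_comm]
  refine Finset.sum_congr rfl fun w _ => Finset.sum_congr rfl fun e _ => ?_
  simp only [Fin.snocEquiv, Equiv.coe_fn_mk, List.ofFn_succ', runWord_concat, Fin.snoc_castSucc,
    Fin.snoc_last]

@[simp]
lemma voterMean_zero (η : V → Bool) (F : (V → Bool) → ℝ≥0∞) : voterMean G η 0 F = F η := by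
  simp [voterMean]

lemma voterMean_succ (η : V → Bool) (k : ℕ) (F : (V → Bool) → ℝ≥0∞) :
    voterMean G η (k + 1) F = voterMean G η k (stepMean G F) := by
  simp only [voterMean, stepMean, sum_words_succ, ← Finset.mul_sum, pow_succ]
  ring

lemma voterMean_add (η : V → Bool) (k : ℕ) (F F' : (V → Bool) → ℝ≥0∞) :
    voterMean G η k (fun ξ => F ξ + F' ξ) = voterMean G η k F + voterMean G η k F' := by
  simp only [voterMean, Finset.sum_add_distrib, mul_add]

lemma voterMean_const_mul (η : V → Bool) (k : ℕ) (a : ℝ≥0∞) (F : (V → Bool) → ℝ≥0∞) :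
    voterMean G η k (fun ξ => a * F ξ) = a * voterMean G η k F := by
  simp only [voterMean, ← Finset.mul_sum]
  ring

lemma voterMean_mono (η : V → Bool) (k : ℕ) {F F' : (V → Bool) → ℝ≥0∞} (h : F ≤ F') :
    voterMean G η k F ≤ voterMean G η k F' := by
  unfold voterMean
  gcongr
  exact h _

variable [Nonempty (DirEdge G)]

lemma stepMean_numOnes :
    stepMean G (fun ξ => (numOnes ξ : ℝ≥0∞)) = fun ξ => (numOnes ξ : ℝ≥0∞) := by
  funext ξ
  rw [stepMean, ← Nat.cast_sum, sum_numOnes_voterUpd, Nat.cast_mul,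
    ENNReal.inv_mul_cancel_left card_dirEdge_ne_zero (ENNReal.natCast_ne_top _)]

lemma stepMean_numOnes_sq :
    stepMean G (fun ξ => (numOnes ξ : ℝ≥0∞) ^ 2) = fun ξ =>
      (numOnes ξ : ℝ≥0∞) ^ 2 + (Fintype.card (DirEdge G) : ℝ≥0∞)⁻¹ * numDiscordant G ξ := by
  funext ξ
  have h := congrArg (Nat.cast : ℕ → ℝ≥0∞) (sum_numOnes_voterUpd_sq (G := G) ξ)
  push_cast at h
  rw [stepMean, h, mul_add,
    ENNReal.inv_mul_cancel_left card_dirEdge_ne_zero (ENNReal.natCast_ne_top _)]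

lemma voterMean_numOnes (η : V → Bool) (k : ℕ) :
    voterMean G η k (fun ξ => (numOnes ξ : ℝ≥0∞)) = numOnes η := by
  induction k with
  | zero => simp
  | succ k ih => rw [voterMean_succ, stepMean_numOnes, ih]

lemma voterMean_numOnes_sq_succ (η : V → Bool) (k : ℕ) :
    voterMean G η (k + 1) (fun ξ => (numOnes ξ : ℝ≥0∞) ^ 2) =
      voterMean G η k (fun ξ => (numOnes ξ : ℝ≥0∞) ^ 2) +
        (Fintype.card (DirEdge G) : ℝ≥0∞)⁻¹ * voterMean G η k (fun ξ => numDiscordant G ξ) := by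
  rw [voterMean_succ, stepMean_numOnes_sq, voterMean_add, voterMean_const_mul]

lemma numOnes_sq_add_sum_voterMean_numDiscordant (η : V → Bool) (K : ℕ) :
    (numOnes η : ℝ≥0∞) ^ 2 + ∑ ℓ ∈ Finset.range K,
        (Fintype.card (DirEdge G) : ℝ≥0∞)⁻¹ * voterMean G η ℓ (fun ξ => numDiscordant G ξ) =
      voterMean G η K (fun ξ => (numOnes ξ : ℝ≥0∞) ^ 2) := by
  induction K with
  | zero => simp
  | succ K ih => rw [Finset.sum_range_succ, ← add_assoc, ih, voterMean_numOnes_sq_succ]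

-- The mean of `numOnes ^ 2` grows by the mean of `numDiscordant / T` per step, the mean of
-- `numOnes` is constant, and `numOnes ^ 2 ≤ n * numOnes`.
lemma four_mul_sum_voterMean_numDiscordant_le (η : V → Bool) (K : ℕ) :
    4 * ∑ ℓ ∈ Finset.range K,
        (Fintype.card (DirEdge G) : ℝ≥0∞)⁻¹ * voterMean G η ℓ (fun ξ => numDiscordant G ξ) ≤
      (Fintype.card V : ℝ≥0∞) ^ 2 := by
  set X := ∑ ℓ ∈ Finset.range K,
    (Fintype.card (DirEdge G) : ℝ≥0∞)⁻¹ * voterMean G η ℓ (fun ξ => numDiscordant G ξ)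
  set N := numOnes η
  set n := Fintype.card V
  have hsq_le : (fun ξ : V → Bool => (numOnes ξ : ℝ≥0∞) ^ 2) ≤
      fun ξ => (n : ℝ≥0∞) * numOnes ξ := fun ξ => by
    simp only [sq]; gcongr; exact_mod_cast numOnes_le ξ
  have hbudget : (N : ℝ≥0∞) ^ 2 + X ≤ n * N := by
    rw [numOnes_sq_add_sum_voterMean_numDiscordant, ← voterMean_numOnes (G := G) η K,
      ← voterMean_const_mul]
    exact voterMean_mono η K hsq_le
  have hamgm : 4 * (n * N) ≤ n ^ 2 + 4 * N ^ 2 := by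
    have : (4 * (n * N) : ℤ) ≤ n ^ 2 + 4 * N ^ 2 := by nlinarith [sq_nonneg ((n : ℤ) - 2 * N)]
    exact_mod_cast this
  refine ENNReal.le_of_add_le_add_left (a := 4 * (N : ℝ≥0∞) ^ 2) (by finiteness) ?_
  calc 4 * (N : ℝ≥0∞) ^ 2 + 4 * X = 4 * ((N : ℝ≥0∞) ^ 2 + X) := by ring
    _ ≤ 4 * ((n : ℝ≥0∞) * N) := by gcongr
    _ ≤ (n : ℝ≥0∞) ^ 2 + 4 * (N : ℝ≥0∞) ^ 2 := by exact_mod_cast hamgm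
    _ = 4 * (N : ℝ≥0∞) ^ 2 + (n : ℝ≥0∞) ^ 2 := add_comm _ _

end Mean

section Events

variable {V : Type*} [DecidableEq V] {G : SimpleGraph V}

variable (G) in
def survivalEvent (d : V → Bool) : Set (ℕ → DirEdge G) :=
  {θ | ∀ k, ∃ v, voterProc d (fun i => (θ i).1) k v = true}

lemma setOf_voterProc_mem_eq (η : V → Bool) (k : ℕ) (S : Set (V → Bool)) :
    {θ : ℕ → DirEdge G | voterProc η (fun i => (θ i).1) k ∈ S} =
      prefixWord k ⁻¹' {w | runWord η (List.ofFn fun i => (w i).1) ∈ S} := by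
  ext θ; simp [voterProc_eq_runWord, prefixWord]

lemma survivalEvent_subset {L : ℕ} {u : Fin L → DirEdge G}
    (hu : ∀ ξ : V → Bool, ∃ b, runWord ξ (List.ofFn fun i => (u i).1) = fun _ => b) (d : V → Bool) :
    survivalEvent G d ⊆
      (⋃ k, {θ | voterProc d (fun i => (θ i).1) k ∈ ({fun _ => true} : Set (V → Bool))}) ∪
        {θ | ∀ j, prefixWord L (shiftSeq (j * L) θ) ≠ u} := by
  intro θ hθ
  by_cases hblock : ∃ j, prefixWord L (shiftSeq (j * L) θ) = u
  · obtain ⟨j, hj⟩ := hblock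
    obtain ⟨b, hb⟩ := hu (voterProc d (fun i => (θ i).1) (j * L))
    have hconst : voterProc d (fun i => (θ i).1) (j * L + L) = fun _ => b := by
      rw [voterProc_add, voterProc_eq_runWord, ← hb, ← hj]; rfl
    cases b
    · obtain ⟨v, hv⟩ := hθ (j * L + L)
      simp [hconst] at hv
    · exact Or.inl (Set.mem_iUnion.2 ⟨_, hconst⟩)
  · exact Or.inr (not_exists.1 hblock)

variable [Fintype V] [DecidableRel G.Adj]

variable (G) in
noncomputable def noncommutingSwaps (c : V → Bool) (ℓ : ℕ) :
    Finset ((Fin ℓ → DirEdge G) × DirEdge G × DirEdge G) :=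
  {q | voterUpd q.2.2.1 (voterUpd q.2.1.1 (runWord c (List.ofFn fun i => (q.1 i).1))) ≠
    voterUpd q.2.1.1 (voterUpd q.2.2.1 (runWord c (List.ofFn fun i => (q.1 i).1)))}

lemma card_noncommutingSwaps_le (c : V → Bool) (ℓ : ℕ) :
    (noncommutingSwaps G c ℓ).card ≤
      6 * G.maxDegree * ∑ p : Fin ℓ → DirEdge G,
        numDiscordant G (runWord c (List.ofFn fun i => (p i).1)) := by
  rw [noncommutingSwaps, Finset.card_filter, Fintype.sum_prod_type, Finset.mul_sum]
  refine Finset.sum_le_sum fun p _ => ?_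
  simpa only [Finset.card_filter] using card_voterUpd_comm_ne_le (G := G) _

lemma consensus_swapSeq_ne_subset (c : V → Bool) (ℓ : ℕ) :
    {θ : ℕ → DirEdge G |
        consensus c (fun i => (θ i).1) ≠ consensus c (fun i => (swapSeq ℓ θ i).1)} ⊆
      ⋃ q ∈ noncommutingSwaps G c ℓ,
        prefixWord (ℓ + 2) ⁻¹' {Fin.snoc (Fin.snoc q.1 q.2.1) q.2.2} ∩
          shiftSeq (ℓ + 2) ⁻¹' survivalEvent G
            (swapDiscrepancy (runWord c (List.ofFn fun i => (q.1 i).1)) q.2.1.1 q.2.2.1) := by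
  intro θ hθ
  have hsurv := survives_of_consensus_ne_swapSeq (ω := fun i => (θ i).1) hθ
  rw [voterProc_eq_runWord c _ ℓ] at hsurv
  obtain ⟨v, hv⟩ := hsurv 0
  refine Set.mem_biUnion (x := (prefixWord ℓ θ, θ ℓ, θ (ℓ + 1))) ?_ ⟨?_, hsurv⟩
  · exact Finset.mem_filter.2 ⟨Finset.mem_univ _, voterUpd_comm_ne_of_swapDiscrepancy hv⟩
  · simp [prefixWord_succ]

end Events

section Probability

variable {V : Type*} [DecidableEq V] [MeasurableSpace V] [MeasurableSingletonClass V]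
  {G : SimpleGraph V}

lemma measurableSet_voterProc_mem [Countable V] (η : V → Bool) (k : ℕ) (S : Set (V → Bool)) :
    MeasurableSet {θ : ℕ → DirEdge G | voterProc η (fun i => (θ i).1) k ∈ S} := by
  rw [setOf_voterProc_mem_eq]
  exact measurableSet_prefixWord_preimage k _

lemma measurableSet_survivalEvent [Countable V] (d : V → Bool) :
    MeasurableSet (survivalEvent G d) := by
  have hset : survivalEvent G d =
      ⋂ k, {θ | voterProc d (fun i => (θ i).1) k ∈ {ξ : V → Bool | ∃ v, ξ v = true}} := by
    ext θ; simp [survivalEvent]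
  rw [hset]
  exact MeasurableSet.iInter fun k => measurableSet_voterProc_mem d k _

variable [Fintype V] [DecidableRel G.Adj] {μ : Measure (ℕ → DirEdge G)}
  (hindep : iIndepFun (fun k θ => θ k) μ)
  (hunif : ∀ k e, μ {θ | θ k = e} = (Fintype.card (DirEdge G) : ℝ≥0∞)⁻¹)
include hindep hunif

lemma measure_voterProc_mem (η : V → Bool) (k : ℕ) (S : Set (V → Bool)) :
    μ {θ | voterProc η (fun i => (θ i).1) k ∈ S} = voterMean G η k (S.indicator 1) := by
  let A : Finset (Fin k → DirEdge G) := {w | runWord η (List.ofFn fun i => (w i).1) ∈ S}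
  have hA : {w | runWord η (List.ofFn fun i => (w i).1) ∈ S} = (A : Set (Fin k → DirEdge G)) := by
    simp [A]
  rw [setOf_voterProc_mem_eq, hA, measure_prefixWord_preimage hindep hunif, voterMean, mul_comm]
  congr 1
  simp [A, Set.indicator_apply, Finset.sum_boole]

variable [IsProbabilityMeasure μ]

-- The synchronizing word a.s. occurs as an aligned block, so the process a.s. reaches consensus,
-- and the mean number of ones stays `numOnes d`.
lemma measure_survivalEvent_le (hconn : G.Connected) (d : V → Bool) :
    μ (survivalEvent G d) ≤ numOnes d * (Fintype.card V : ℝ≥0∞)⁻¹ := by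
  have : Nonempty (DirEdge G) := nonempty_of_isProbabilityMeasure_seq μ
  have : Nonempty V := ⟨this.some.1.1⟩
  obtain ⟨L, u, hu⟩ := exists_synchronizing_word hconn
  let allTrue : ℕ → Set (ℕ → DirEdge G) := fun k =>
    {θ | voterProc d (fun i => (θ i).1) k ∈ ({fun _ => true} : Set (V → Bool))}
  have hmono : Monotone allTrue := fun k k' hk θ hθ =>
    funext (voterProc_allTrue_of_le hk (congrFun hθ))
  have hpoint : (Set.indicator {fun _ => true} 1 : (V → Bool) → ℝ≥0∞) ≤
      fun ξ => (Fintype.card V : ℝ≥0∞)⁻¹ * numOnes ξ := fun ξ => by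
    by_cases h : ξ = fun _ => true
    · subst h
      simp [numOnes_const_true, ENNReal.inv_mul_cancel]
    · simp [h]
  calc μ (survivalEvent G d)
      ≤ μ (⋃ k, allTrue k) + μ {θ | ∀ j, prefixWord L (shiftSeq (j * L) θ) ≠ u} :=
        (measure_mono (survivalEvent_subset hu d)).trans (measure_union_le _ _)
    _ = ⨆ k, μ (allTrue k) := by
        rw [measure_forall_block_ne_eq_zero hindep hunif, add_zero, hmono.measure_iUnion]
    _ ≤ numOnes d * (Fintype.card V : ℝ≥0∞)⁻¹ := iSup_le fun k => by
        rw [measure_voterProc_mem hindep hunif, mul_comm, ← voterMean_numOnes (G := G) d k,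
          ← voterMean_const_mul]
        exact voterMean_mono d k hpoint

lemma measure_consensus_swapSeq_ne_le (hconn : G.Connected) (c : V → Bool) (ℓ : ℕ) :
    μ {θ | consensus c (fun i => (θ i).1) ≠ consensus c (fun i => (swapSeq ℓ θ i).1)} ≤
      12 * G.maxDegree * (Fintype.card V : ℝ≥0∞)⁻¹ * (Fintype.card (DirEdge G) : ℝ≥0∞)⁻¹ *
        ((Fintype.card (DirEdge G) : ℝ≥0∞)⁻¹ * voterMean G c ℓ (fun ξ => numDiscordant G ξ)) := by
  set t := (Fintype.card (DirEdge G) : ℝ≥0∞)⁻¹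
  set n := (Fintype.card V : ℝ≥0∞)
  have hterm : ∀ q ∈ noncommutingSwaps G c ℓ,
      μ (prefixWord (ℓ + 2) ⁻¹' {Fin.snoc (Fin.snoc q.1 q.2.1) q.2.2} ∩
        shiftSeq (ℓ + 2) ⁻¹' survivalEvent G
          (swapDiscrepancy (runWord c (List.ofFn fun i => (q.1 i).1)) q.2.1.1 q.2.2.1)) ≤
        t ^ (ℓ + 2) * (2 * n⁻¹) := fun q _ => by
    rw [measure_prefixWord_preimage_inter_shiftSeq hindep hunif _ (measurableSet_survivalEvent _),
      measure_prefixWord_preimage_singleton hindep hunif]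
    gcongr
    refine (measure_survivalEvent_le hindep hunif hconn _).trans ?_
    gcongr
    exact_mod_cast numOnes_swapDiscrepancy_le _ _ _
  calc _ ≤ ∑ q ∈ noncommutingSwaps G c ℓ, t ^ (ℓ + 2) * (2 * n⁻¹) :=
        (measure_mono (consensus_swapSeq_ne_subset c ℓ)).trans
          ((measure_biUnion_finset_le _ _).trans (Finset.sum_le_sum hterm))
    _ = (noncommutingSwaps G c ℓ).card * (t ^ (ℓ + 2) * (2 * n⁻¹)) := by
        rw [Finset.sum_const, nsmul_eq_mul]
    _ ≤ ((6 * G.maxDegree * ∑ p : Fin ℓ → DirEdge G,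
          numDiscordant G (runWord c (List.ofFn fun i => (p i).1)) : ℕ) : ℝ≥0∞) *
          (t ^ (ℓ + 2) * (2 * n⁻¹)) := by
        gcongr
        exact card_noncommutingSwaps_le c ℓ
    _ = _ := by
        simp only [voterMean, Nat.cast_mul, Nat.cast_sum, Nat.cast_ofNat]
        ring

lemma tsum_measure_consensus_swapSeq_ne_le (hconn : G.Connected) (c : V → Bool) :
    ∑' ℓ, μ {θ | consensus c (fun i => (θ i).1) ≠ consensus c (fun i => (swapSeq ℓ θ i).1)} ≤
      3 * Fintype.card V * G.maxDegree * (Fintype.card (DirEdge G) : ℝ≥0∞)⁻¹ := by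
  have : Nonempty (DirEdge G) := nonempty_of_isProbabilityMeasure_seq μ
  have : Nonempty V := ⟨this.some.1.1⟩
  set t := (Fintype.card (DirEdge G) : ℝ≥0∞)⁻¹
  set n := (Fintype.card V : ℝ≥0∞)
  have hn : n⁻¹ * n = 1 := ENNReal.inv_mul_cancel (by simp [n]) (ENNReal.natCast_ne_top _)
  refine ENNReal.tsum_le_of_sum_range_le fun K => ?_
  calc _ ≤ ∑ ℓ ∈ Finset.range K, 12 * G.maxDegree * n⁻¹ * t *
          (t * voterMean G c ℓ (fun ξ => numDiscordant G ξ)) :=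
        Finset.sum_le_sum fun ℓ _ => measure_consensus_swapSeq_ne_le hindep hunif hconn c ℓ
    _ = 3 * G.maxDegree * n⁻¹ * t *
          (4 * ∑ ℓ ∈ Finset.range K, t * voterMean G c ℓ (fun ξ => numDiscordant G ξ)) := by
        rw [← Finset.mul_sum]; ring
    _ ≤ 3 * G.maxDegree * n⁻¹ * t * n ^ 2 := by
        gcongr; exact four_mul_sum_voterMean_numDiscordant_le c K
    _ = 3 * n * G.maxDegree * t * (n⁻¹ * n) := by ring
    _ = 3 * n * G.maxDegree * t := by rw [hn, mul_one]

end Probability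

lemma measure_prod_le_sum_singleton {α β : Type*} [Fintype α] [MeasurableSpace α]
    [MeasurableSpace β] (μ : Measure α) (ν : Measure β) [SFinite ν] (S : Set (α × β)) :
    μ.prod ν S ≤ ∑ a, μ {a} * ν (Prod.mk a ⁻¹' S) :=
  calc μ.prod ν S ≤ μ.prod ν (⋃ a, {a} ×ˢ (Prod.mk a ⁻¹' S)) :=
        measure_mono fun x hx => Set.mem_iUnion.2 ⟨x.1, rfl, hx⟩
    _ ≤ ∑ a, μ.prod ν ({a} ×ˢ (Prod.mk a ⁻¹' S)) := measure_iUnion_fintype_le _ _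
    _ = ∑ a, μ {a} * ν (Prod.mk a ⁻¹' S) := by simp only [Measure.prod_prod]

lemma tsum_measure_prod_le {α β : Type*} [Fintype α] [MeasurableSpace α]
    [MeasurableSingletonClass α] [MeasurableSpace β] (μ : Measure α) [IsProbabilityMeasure μ]
    (ν : Measure β) [SFinite ν] (S : ℕ → Set (α × β)) {B : ℝ≥0∞}
    (hB : ∀ a, ∑' ℓ, ν (Prod.mk a ⁻¹' S ℓ) ≤ B) :
    ∑' ℓ, μ.prod ν (S ℓ) ≤ B :=
  calc ∑' ℓ, μ.prod ν (S ℓ) ≤ ∑' ℓ, ∑ a, μ {a} * ν (Prod.mk a ⁻¹' S ℓ) :=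
        ENNReal.tsum_le_tsum fun ℓ => measure_prod_le_sum_singleton μ ν (S ℓ)
    _ = ∑ a, μ {a} * ∑' ℓ, ν (Prod.mk a ⁻¹' S ℓ) := by
        rw [Summable.tsum_finsetSum fun _ _ => ENNReal.summable]
        simp only [ENNReal.tsum_mul_left]
    _ ≤ ∑ a, μ {a} * B := by gcongr with a; exact hB a
    _ = B := by rw [← Finset.sum_mul, sum_measure_singleton, Finset.coe_univ, measure_univ, one_mul]

end VoterSwap

open VoterSwap

theorem stmt9_general {V : Type*} [Fintype V] [DecidableEq V]
    [MeasurableSpace V] [MeasurableSingletonClass V]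
    (G : SimpleGraph V) [DecidableRel G.Adj] (hconn : G.Connected)
    (ν : Measure Bool) [IsProbabilityMeasure ν]
    (μω : Measure (ℕ → {e : V × V // G.Adj e.1 e.2})) [IsProbabilityMeasure μω]
    (hindep : iIndepFun (fun k ω => ω k) μω)
    (hunif : ∀ (k : ℕ) (e : {e : V × V // G.Adj e.1 e.2}),
      μω {ω | ω k = e} = (2 * G.edgeFinset.card : ℝ≥0∞)⁻¹) :
    ∑' ℓ : ℕ,
      (Measure.prod (Measure.pi fun _ : V => ν) μω)
        {x | consensus x.1 (fun i => ((x.2 i : V × V))) ≠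
             consensus x.1 (fun i => ((swapSeq ℓ x.2 i).1))}
      ≤ ENNReal.ofReal
          (3 * (Fintype.card V : ℝ) * (G.maxDegree : ℝ) / (G.edgeFinset.card : ℝ)) := by
  have : Nonempty (DirEdge G) := nonempty_of_isProbabilityMeasure_seq μω
  have hunif' : ∀ k (e : DirEdge G), μω {θ | θ k = e} = (Fintype.card (DirEdge G) : ℝ≥0∞)⁻¹ := by
    simpa [card_dirEdge] using hunif
  have hE : (0 : ℝ) < G.edgeFinset.card := by
    have := Fintype.card_pos (α := DirEdge G)
    rw [card_dirEdge] at this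
    exact_mod_cast Nat.pos_of_mul_pos_left this
  calc _ ≤ 3 * Fintype.card V * G.maxDegree * (Fintype.card (DirEdge G) : ℝ≥0∞)⁻¹ :=
        tsum_measure_prod_le _ _ _ fun c =>
          tsum_measure_consensus_swapSeq_ne_le hindep hunif' hconn c
    _ ≤ _ := by
        rw [card_dirEdge, ENNReal.ofReal_div_of_pos hE, div_eq_mul_inv]
        push_cast
        gcongr
        · exact_mod_cast (ENNReal.ofReal_natCast (3 * Fintype.card V * G.maxDegree)).ge
        · rw [ENNReal.ofReal_natCast]
          exact le_mul_of_one_le_left' (by norm_num)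

/-- For the voter model on a finite connected graph with `n` vertices and
maximum degree `Δ`, with i.i.d. Bernoulli(p) initial opinions independent of the i.i.d.
uniform edge selections, the sum over `ℓ` of the probabilities that swapping the `ℓ`-th and
`(ℓ+1)`-th edge selections changes the consensus opinion is at most `3nΔ/|E|`. -/
theorem stmt9 {V : Type*} [Fintype V] [DecidableEq V]
    [MeasurableSpace V] [MeasurableSingletonClass V]
    (G : SimpleGraph V) [DecidableRel G.Adj] (hconn : G.Connected)
    (p : ℝ) (hp0 : 0 < p) (hp1 : p < 1)
    (ν : Measure Bool) [IsProbabilityMeasure ν] (hν : ν {true} = ENNReal.ofReal p)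
    (μω : Measure (ℕ → {e : V × V // G.Adj e.1 e.2})) [IsProbabilityMeasure μω]
    (hindep : iIndepFun (fun k ω => ω k) μω)
    (hunif : ∀ (k : ℕ) (e : {e : V × V // G.Adj e.1 e.2}),
      μω {ω | ω k = e} = (2 * G.edgeFinset.card : ℝ≥0∞)⁻¹) :
    ∑' ℓ : ℕ,
      (Measure.prod (Measure.pi fun _ : V => ν) μω)
        {x | consensus x.1 (fun i => ((x.2 i : V × V))) ≠
             consensus x.1 (fun i => ((swapSeq ℓ x.2 i).1))}
      ≤ ENNReal.ofReal
          (3 * (Fintype.card V : ℝ) * (G.maxDegree : ℝ) / (G.edgeFinset.card : ℝ)) :=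
  stmt9_general G hconn ν μω hindep hunif
end

section
/- Let G = (V, E) be a finite connected graph with n ≥ 2 vertices, and let ω = (ω(k))_{k≥1} be an i.i.d. sequence of uniform directed edges. Then almost surely there exists a unique vertex v ∈ V such that for every initial configuration η₀ ∈ {0,1}^V, the consensus opinion of the voter model driven by (η₀, ω) equals η₀(v). -/
open MeasureTheory ProbabilityTheory
open scoped ENNReal Classical

/-!
The opinion of `u` at time `k` is the initial opinion of its ancestor, found by tracing the
copying edges backwards in time. In a connected graph a fixed finite word of directed edges,
spreading the opinion of a vertex `c` along a growing set, makes every vertex a descendant of `c`.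
Disjoint consecutive blocks of an i.i.d. uniform sequence are independent and each equals this
word with the same positive probability, so by the second Borel–Cantelli lemma the word a.s.
occurs. From then on all vertices share one ancestor `v`, whose initial opinion is the consensus
for every initial configuration, and testing the indicator of `v` shows that `v` is unique.
-/

lemma Nat.injective_mul_add_fin (L : ℕ) :
    Function.Injective fun q : ℕ × Fin L => q.1 * L + q.2 := by
  rintro ⟨m, i⟩ ⟨m', i'⟩ h
  have hdivmod : ∀ (m : ℕ) (i : Fin L), (m * L + i) / L = m ∧ (m * L + i) % L = i :=
    fun m i => (Nat.div_mod_unique i.pos).2 ⟨by ring, i.isLt⟩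
  obtain ⟨h1, h2⟩ := hdivmod m i
  obtain ⟨h1', h2'⟩ := hdivmod m' i'
  simp only at h
  rw [h] at h1 h2
  ext <;> simp only <;> omega

namespace ProbabilityTheory

theorem iIndepFun.ae_exists_block_eq {Ω α : Type*} [MeasurableSpace Ω] [MeasurableSpace α]
    [MeasurableSingletonClass α] {μ : Measure Ω} {X : ℕ → Ω → α} (hX : ∀ k, Measurable (X k))
    (hindep : iIndepFun X μ) {p : α → ℝ≥0∞} (hp : ∀ k a, μ (X k ⁻¹' {a}) = p a)
    {L : ℕ} (W : Fin L → α) (hW : ∀ i, p (W i) ≠ 0) :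
    ∀ᵐ ω ∂μ, ∃ m, ∀ i : Fin L, X (m * L + i) ω = W i := by
  have := hindep.isProbabilityMeasure
  set A : ℕ → Set Ω := fun m => ⋂ i : Fin L, X (m * L + i) ⁻¹' {W i}
  have hA : ∀ m, MeasurableSet (A m) := fun m =>
    MeasurableSet.iInter fun i => hX _ (measurableSet_singleton _)
  have hmeas (S : Finset ℕ) : μ (⋂ m ∈ S, A m) = ∏ _m ∈ S, ∏ i, p (W i) := by
    have hS : ⋂ m ∈ S, A m =
        ⋂ q ∈ S ×ˢ (Finset.univ : Finset (Fin L)), X (q.1 * L + q.2) ⁻¹' {W q.2} := by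
      ext ω
      simp only [A, Set.mem_iInter, Finset.mem_product, Finset.mem_univ, and_true]
      exact ⟨fun h q hq => h q.1 hq q.2, fun h m hm i => h (m, i) hm⟩
    rw [hS, (hindep.precomp (Nat.injective_mul_add_fin L)).meas_biInter
      fun q _ => ⟨{W q.2}, measurableSet_singleton _, rfl⟩, Finset.prod_product]
    simp only [hp]
  have hA_eq (m : ℕ) : μ (A m) = ∏ i, p (W i) := by simpa using hmeas {m}
  have hAindep : iIndepSet A μ :=
    (iIndepSet_iff_meas_biInter hA).2 fun S => by simp only [hmeas, hA_eq]
  have hsum : ∑' m, μ (A m) = ∞ := by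
    simp only [hA_eq]
    exact ENNReal.tsum_const_eq_top_of_ne_zero (Finset.prod_ne_zero_iff.2 fun i _ => hW i)
  filter_upwards [(mem_ae_iff_prob_eq_one (MeasurableSet.measurableSet_limsup hA)).2
    (measure_limsup_eq_one hA hAindep hsum)] with ω hω
  simpa [A] using (Filter.mem_limsup_iff_frequently_mem.1 hω).exists

end ProbabilityTheory

section Genealogy

variable {V : Type*} [DecidableEq V]

def voterAncestor (ω : ℕ → V × V) : ℕ → V → V
  | 0 => id
  | k + 1 => fun u => voterAncestor ω k (if u = (ω k).2 then (ω k).1 else u)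

lemma voterProc_eq_voterAncestor (η0 : V → Bool) (ω : ℕ → V × V) (k : ℕ) (u : V) :
    voterProc η0 ω k u = η0 (voterAncestor ω k u) := by
  induction k generalizing u with
  | zero => rfl
  | succ k ih =>
    simp only [voterProc, voterUpd, Function.update_apply, voterAncestor]
    split_ifs <;> apply ih

lemma voterAncestor_add (ω : ℕ → V × V) (k m : ℕ) :
    voterAncestor ω (k + m) = voterAncestor ω k ∘ voterAncestor (fun i => ω (k + i)) m := by
  induction m with
  | zero => rfl
  | succ m ih => funext u; exact congrFun ih _

lemma voterProc_add (η0 : V → Bool) (ω : ℕ → V × V) (k m : ℕ) (u : V) :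
    voterProc η0 ω (k + m) u = voterProc η0 ω k (voterAncestor (fun i => ω (k + i)) m u) := by
  rw [voterProc_eq_voterAncestor, voterAncestor_add, Function.comp_apply,
    voterProc_eq_voterAncestor]

lemma consensus_eq_of_voterAncestor_eq {ω : ℕ → V × V} {K : ℕ} {v : V}
    (hK : ∀ u, voterAncestor ω K u = v) (η0 : V → Bool) : consensus η0 ω = η0 v := by
  have hconst (m : ℕ) (u : V) : voterProc η0 ω (K + m) u = η0 v := by
    rw [voterProc_eq_voterAncestor, voterAncestor_add, Function.comp_apply, hK]
  unfold consensus
  split_ifs with h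
  · obtain ⟨k, hk⟩ := h
    rw [← hconst k v, Nat.add_comm, voterProc_add, hk]
  · refine (Bool.eq_false_iff.2 fun hv => h ⟨K, fun u => ?_⟩).symm
    simpa [hv] using hconst 0 u

lemma existsUnique_consensus_eq_of_voterAncestor_eq {ω : ℕ → V × V} {K : ℕ} {v : V}
    (hK : ∀ u, voterAncestor ω K u = v) :
    ∃! v' : V, ∀ η0 : V → Bool, consensus η0 ω = η0 v' := by
  refine ⟨v, consensus_eq_of_voterAncestor_eq hK, fun v' hv' => ?_⟩
  simpa using (hv' fun x => decide (x = v)).symm.trans (consensus_eq_of_voterAncestor_eq hK _)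

end Genealogy

section Funnel

variable {V : Type*} [DecidableEq V] (G : SimpleGraph V)

def Funnels (c : V) (S : Finset V) : Prop :=
  ∃ (L : ℕ) (W : Fin L → {e : V × V // G.Adj e.1 e.2}), ∀ ω : ℕ → V × V,
    (∀ i : Fin L, ω i = W i) → ∀ u ∈ S, voterAncestor ω L u = c

variable {G}

lemma funnels_singleton (c : V) : Funnels G c {c} :=
  ⟨0, Fin.elim0, fun _ _ _ hu => Finset.mem_singleton.1 hu⟩

lemma Funnels.insert {c x z : V} {S : Finset V} (hS : Funnels G c S) (hx : x ∈ S)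
    (hxz : G.Adj x z) : Funnels G c (insert z S) := by
  obtain ⟨L, W, hW⟩ := hS
  refine ⟨L + 1, Fin.snoc W ⟨(x, z), hxz⟩, fun ω hω u hu => ?_⟩
  have hprefix : ∀ i : Fin L, ω i = W i := fun i => by simpa using hω i.castSucc
  have hlast : ω L = (x, z) := by simpa using hω (Fin.last L)
  show voterAncestor ω L (if u = (ω L).2 then (ω L).1 else u) = c
  rw [hlast]
  split_ifs with huz
  · exact hW ω hprefix x hx
  · exact hW ω hprefix u ((Finset.mem_insert.1 hu).resolve_left huz)

lemma SimpleGraph.Connected.funnels_univ [Fintype V] (hconn : G.Connected) (c : V) :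
    Funnels G c Finset.univ := by
  obtain ⟨S, hS, hmax⟩ := (Finset.univ.filter (Funnels G c)).exists_max_image Finset.card
    ⟨{c}, Finset.mem_filter.2 ⟨Finset.mem_univ _, funnels_singleton c⟩⟩
  have hSc := hmax {c} (Finset.mem_filter.2 ⟨Finset.mem_univ _, funnels_singleton c⟩)
  obtain ⟨s, hs⟩ : S.Nonempty := Finset.card_pos.1 (by simpa using hSc)
  rw [Finset.mem_filter] at hS
  suffices ∀ y, y ∈ S from Finset.eq_univ_iff_forall.2 this ▸ hS.2
  intro y
  by_contra hy
  obtain ⟨d, -, hdS, hdy⟩ := (hconn s y).some.exists_boundary_dart S hs hy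
  have := hmax _ (Finset.mem_filter.2 ⟨Finset.mem_univ _, hS.2.insert hdS d.adj⟩)
  rw [Finset.card_insert_of_notMem hdy] at this
  omega

end Funnel

theorem stmt10_general {V : Type*} [Fintype V] [DecidableEq V]
    [MeasurableSpace V] [MeasurableSingletonClass V]
    (G : SimpleGraph V) [DecidableRel G.Adj]
    (hconn : G.Connected)
    (μω : Measure (ℕ → {e : V × V // G.Adj e.1 e.2})) [IsProbabilityMeasure μω]
    (hindep : iIndepFun (fun k ω => ω k) μω)
    (hunif : ∀ (k : ℕ) (e : {e : V × V // G.Adj e.1 e.2}),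
      μω {ω | ω k = e} = (2 * G.edgeFinset.card : ℝ≥0∞)⁻¹) :
    ∀ᵐ ω ∂μω, ∃! v : V, ∀ η0 : V → Bool,
      consensus η0 (fun i => ((ω i : V × V))) = η0 v := by
  have c : V := ((nonempty_of_isProbabilityMeasure μω).some 0).1.1
  obtain ⟨L, W, hW⟩ := hconn.funnels_univ c
  have hblock := hindep.ae_exists_block_eq (fun k => measurable_pi_apply k) hunif W
    fun _ => ENNReal.inv_ne_zero.2 (by finiteness)
  filter_upwards [hblock] with ω ⟨m, hm⟩
  refine existsUnique_consensus_eq_of_voterAncestor_eq (K := m * L + L)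
    (v := voterAncestor (fun i => ω i) (m * L) c) fun u => ?_
  rw [voterAncestor_add, Function.comp_apply,
    hW _ (fun i => congrArg Subtype.val (hm i)) u (Finset.mem_univ u)]

/-- For a finite connected graph with `n ≥ 2` vertices and i.i.d. uniform
edge selections, almost surely there is a unique vertex `v` (the dictator) such that for
every initial configuration the consensus opinion equals the initial opinion of `v`. -/
theorem stmt10 {V : Type*} [Fintype V] [DecidableEq V]
    [MeasurableSpace V] [MeasurableSingletonClass V]
    (G : SimpleGraph V) [DecidableRel G.Adj]
    (hconn : G.Connected) (hcard : 2 ≤ Fintype.card V)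
    (μω : Measure (ℕ → {e : V × V // G.Adj e.1 e.2})) [IsProbabilityMeasure μω]
    (hindep : iIndepFun (fun k ω => ω k) μω)
    (hunif : ∀ (k : ℕ) (e : {e : V × V // G.Adj e.1 e.2}),
      μω {ω | ω k = e} = (2 * G.edgeFinset.card : ℝ≥0∞)⁻¹) :
    ∀ᵐ ω ∂μω, ∃! v : V, ∀ η0 : V → Bool,
      consensus η0 (fun i => ((ω i : V × V))) = η0 v :=
  stmt10_general G hconn μω hindep hunif
end

section
/- Let s > 0 and λ > 0. Let X be a real random variable with the centered Gaussian distribution of variance s, and let γ be an independent random variable with the exponential distribution of rate 2λ. Then P(X ≥ γ) ≤ 2λ√s · (1 + e^{2λ²s}). -/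
open MeasureTheory ProbabilityTheory
open scoped ENNReal NNReal

/-!
Conditioning on `X`, `P(γ ≤ X) = E[F(X)]` where `F` is the exponential CDF, and
`F(x) = 1 - e^{-2λx} ≤ 2λ x⁺`. The Gaussian half-moment is explicit, `E[X⁺] = √s / √(2π) ≤ √s`,
so in fact `P(X ≥ γ) ≤ 2λ√s`.
-/

open Real Set

theorem integral_Ioi_mul_exp_neg_mul_sq {b : ℝ} (hb : 0 < b) :
    ∫ x in Ioi (0 : ℝ), x * exp (-b * x ^ 2) = (2 * b)⁻¹ := by
  have h := integral_mul_cexp_neg_mul_sq (b := (b : ℂ)) (by simpa using hb)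
  rw [← Complex.ofReal_inj, ← integral_complex_ofReal]
  push_cast
  exact h

namespace ProbabilityTheory

theorem expMeasure_Iic_le {r : ℝ} (hr : 0 < r) (x : ℝ) :
    expMeasure r (Iic x) ≤ ENNReal.ofReal (r * x) := by
  have := isProbabilityMeasure_expMeasure hr
  rw [← ofReal_cdf, cdf_expMeasure_eq hr]
  split_ifs with hx
  · exact ENNReal.ofReal_le_ofReal (by linarith [add_one_le_exp (-(r * x))])
  · simp

/-- Since `ENNReal.ofReal` truncates at `0`, this is the half-moment `E[X⁺]`. -/
theorem lintegral_ofReal_gaussianReal_zero (v : ℝ≥0) :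
    ∫⁻ x, ENNReal.ofReal x ∂gaussianReal 0 v = ENNReal.ofReal (√v / √(2 * π)) := by
  rcases eq_or_ne v 0 with rfl | hv
  · simp
  have hv' : (0 : ℝ) < v := by positivity
  have hb : (0 : ℝ) < (2 * (v : ℝ))⁻¹ := by positivity
  have hpdf : ∀ x, gaussianPDFReal 0 v x * x
      = (√(2 * π * v))⁻¹ * (x * exp (-(2 * (v : ℝ))⁻¹ * x ^ 2)) := by
    intro x
    rw [gaussianPDFReal, sub_zero, neg_div, div_eq_inv_mul, neg_mul, mul_comm x, mul_assoc]
  have hIoi : (fun x ↦ ENNReal.ofReal (gaussianPDFReal 0 v x * x))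
      = (Ioi 0).indicator (fun x ↦ ENNReal.ofReal (gaussianPDFReal 0 v x * x)) := by
    ext x
    by_cases hx : 0 < x
    · simp [hx]
    · simp [hx, ENNReal.ofReal_eq_zero,
        mul_nonpos_of_nonneg_of_nonpos (gaussianPDFReal_nonneg 0 v x) (not_lt.mp hx)]
  rw [gaussianReal_of_var_ne_zero _ hv,
    lintegral_withDensity_eq_lintegral_mul _ (measurable_gaussianPDF 0 v) ENNReal.measurable_ofReal]
  simp_rw [Pi.mul_apply, gaussianPDF, ← ENNReal.ofReal_mul (gaussianPDFReal_nonneg 0 v _)]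
  rw [hIoi, lintegral_indicator measurableSet_Ioi]
  simp_rw [hpdf]
  rw [← ofReal_integral_eq_lintegral_ofReal
      ((integrable_mul_exp_neg_mul_sq hb).const_mul _).integrableOn
      (ae_restrict_of_forall_mem measurableSet_Ioi fun x (hx : 0 < x) ↦ by positivity),
    integral_const_mul, integral_Ioi_mul_exp_neg_mul_sq hb]
  congr 1
  rw [sqrt_mul (by positivity) v]
  field_simp
  rw [sq_sqrt hv'.le]

theorem IndepFun.measure_le_eq_lintegral_map_Iic {Ω : Type*} {m0 : MeasurableSpace Ω}
    {μ : Measure Ω} [IsFiniteMeasure μ] {X Y : Ω → ℝ} (hX : Measurable X) (hY : Measurable Y)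
    (h : IndepFun X Y μ) :
    μ {ω | Y ω ≤ X ω} = ∫⁻ x, μ.map Y (Iic x) ∂μ.map X := by
  have hle : MeasurableSet {p : ℝ × ℝ | p.2 ≤ p.1} := measurableSet_le measurable_snd measurable_fst
  have hprod := (indepFun_iff_map_prod_eq_prod_map_map hX.aemeasurable hY.aemeasurable).mp h
  have := Measure.map_apply (μ := μ) (hX.prodMk hY) hle
  rw [hprod, Measure.prod_apply hle] at this
  exact this.symm

end ProbabilityTheory

theorem stmt14_general
    {Ω : Type*} {m0 : MeasurableSpace Ω} {μ : Measure Ω} [IsProbabilityMeasure μ]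
    (s : ℝ≥0) (r : ℝ) (hr : 0 < r)
    (X γ : Ω → ℝ) (hX : Measurable X) (hγ : Measurable γ)
    (hXd : Measure.map X μ = gaussianReal 0 s)
    (hγd : Measure.map γ μ = expMeasure (2 * r))
    (hind : IndepFun X γ μ) :
    μ {ω | γ ω ≤ X ω} ≤
      ENNReal.ofReal (2 * r * Real.sqrt s * (1 + Real.exp (2 * r ^ 2 * s))) := by
  have h2r : 0 < 2 * r := by positivity
  have hπ : 1 ≤ √(2 * π) := one_le_sqrt.2 (by linarith [pi_gt_three])
  calc μ {ω | γ ω ≤ X ω} = ∫⁻ x, expMeasure (2 * r) (Iic x) ∂gaussianReal 0 s := by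
        rw [hind.measure_le_eq_lintegral_map_Iic hX hγ, hXd, hγd]
    _ ≤ ∫⁻ x, ENNReal.ofReal (2 * r) * ENNReal.ofReal x ∂gaussianReal 0 s :=
        lintegral_mono fun x ↦ (expMeasure_Iic_le h2r x).trans_eq (ENNReal.ofReal_mul h2r.le)
    _ = ENNReal.ofReal (2 * r * (√s / √(2 * π))) := by
        rw [lintegral_const_mul _ ENNReal.measurable_ofReal, lintegral_ofReal_gaussianReal_zero,
          ENNReal.ofReal_mul h2r.le]
    _ ≤ ENNReal.ofReal (2 * r * √s * (1 + exp (2 * r ^ 2 * s))) := by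
        refine ENNReal.ofReal_le_ofReal ?_
        calc 2 * r * (√s / √(2 * π)) ≤ 2 * r * √s := by
              gcongr; exact div_le_self (sqrt_nonneg _) hπ
          _ ≤ 2 * r * √s * (1 + exp (2 * r ^ 2 * s)) :=
            le_mul_of_one_le_right (by positivity) (by linarith [exp_pos (2 * r ^ 2 * s)])

/-- If `X` is a centered Gaussian random variable of variance `s > 0` and
`γ` is an independent exponential random variable of rate `2λ` (`λ > 0`), then
`P(X ≥ γ) ≤ 2λ√s (1 + e^{2λ²s})`. -/
theorem stmt14
    {Ω : Type*} {m0 : MeasurableSpace Ω} {μ : Measure Ω} [IsProbabilityMeasure μ]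
    (s : ℝ≥0) (hs : 0 < s) (r : ℝ) (hr : 0 < r)
    (X γ : Ω → ℝ) (hX : Measurable X) (hγ : Measurable γ)
    (hXd : Measure.map X μ = gaussianReal 0 s)
    (hγd : Measure.map γ μ = expMeasure (2 * r))
    (hind : IndepFun X γ μ) :
    μ {ω | γ ω ≤ X ω} ≤
      ENNReal.ofReal (2 * r * Real.sqrt s * (1 + Real.exp (2 * r ^ 2 * s))) :=
  stmt14_general (m0 := m0) s r hr X γ hX hγ hXd hγd hind
end

section
/- Let j ≥ 2 be an integer, λ > 0, s > 0, and let γ be a random variable with the Gamma distribution of shape j and rate 2λ. Then P(γ ≤ √s · log j) ≤ e · (1 + 1/(2λ√s · log j))^{−j}. -/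
open MeasureTheory ProbabilityTheory
open scoped ENNReal

/-!
Exponential tilting: on `[0, ∞)` the Gamma density of rate `R` is `(R / R')^a e^{(R' - R) x}`
times the density of rate `R' ≥ R`, so on `(-∞, t]` it is at most `(R / R')^a e^{(R' - R) t}`
times a probability density. Taking `R = 2λ`, `t = √s log j` and `R' = R + 1/t` gives the bound.
-/

lemma gammaPDF_eq_ofReal_mul_gammaPDF {a R R' : ℝ} (hR : 0 ≤ R) (hR' : 0 < R') (x : ℝ) :
    gammaPDF a R x =
      ENNReal.ofReal ((R / R') ^ a * Real.exp ((R' - R) * x)) * gammaPDF a R' x := by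
  rcases lt_or_ge x 0 with hx | hx
  · simp [gammaPDF_of_neg hx]
  rw [gammaPDF_of_nonneg hx, gammaPDF_of_nonneg hx, ← ENNReal.ofReal_mul (by positivity)]
  congr 1
  have hR'a : R' ^ a ≠ 0 := (Real.rpow_pos_of_pos hR' a).ne'
  have hexp : Real.exp (-(R * x)) = Real.exp ((R' - R) * x) * Real.exp (-(R' * x)) := by
    rw [← Real.exp_add]; ring_nf
  rw [Real.div_rpow hR hR'.le, hexp]
  field_simp

lemma gammaMeasure_Iic_le_rpow_mul_exp {a R R' : ℝ} (ha : 0 < a) (hR : 0 ≤ R) (hRR' : R ≤ R')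
    (hR' : 0 < R') (t : ℝ) :
    gammaMeasure a R (Set.Iic t) ≤ ENNReal.ofReal ((R / R') ^ a * Real.exp ((R' - R) * t)) := by
  have := isProbabilityMeasure_gammaMeasure ha hR'
  have hpdf : Measurable (gammaPDF a R') := (measurable_gammaPDFReal a R').ennreal_ofReal
  calc gammaMeasure a R (Set.Iic t)
      = ∫⁻ x in Set.Iic t,
          ENNReal.ofReal ((R / R') ^ a * Real.exp ((R' - R) * x)) * gammaPDF a R' x := by
        simp_rw [gammaMeasure, withDensity_apply _ measurableSet_Iic,
          gammaPDF_eq_ofReal_mul_gammaPDF hR hR']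
    _ ≤ ∫⁻ x in Set.Iic t,
          ENNReal.ofReal ((R / R') ^ a * Real.exp ((R' - R) * t)) * gammaPDF a R' x := by
        refine setLIntegral_mono (hpdf.const_mul _) fun x hx => ?_
        gcongr
        exact hx
    _ = ENNReal.ofReal ((R / R') ^ a * Real.exp ((R' - R) * t)) *
          gammaMeasure a R' (Set.Iic t) := by
        rw [lintegral_const_mul _ hpdf, gammaMeasure, withDensity_apply _ measurableSet_Iic]
    _ ≤ ENNReal.ofReal ((R / R') ^ a * Real.exp ((R' - R) * t)) :=
        mul_le_of_le_one_right' prob_le_one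

/-- If `γ` has the Gamma distribution of integer shape `j ≥ 2` and rate
`2λ` (`λ > 0`), then for every `s > 0`,
`P(γ ≤ √s log j) ≤ e (1 + 1/(2λ√s log j))^{-j}`. -/
theorem stmt16
    {Ω : Type*} {m0 : MeasurableSpace Ω} {μ : Measure Ω} [IsProbabilityMeasure μ]
    (j : ℕ) (hj : 2 ≤ j) (r : ℝ) (hr : 0 < r) (s : ℝ) (hs : 0 < s)
    (γ : Ω → ℝ) (hγ : Measurable γ)
    (hγd : Measure.map γ μ = gammaMeasure (j : ℝ) (2 * r)) :
    μ {ω | γ ω ≤ Real.sqrt s * Real.log j} ≤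
      ENNReal.ofReal
        (Real.exp 1 * ((1 + 1 / (2 * r * Real.sqrt s * Real.log j)) ^ j)⁻¹) := by
  set t := Real.sqrt s * Real.log j
  have ht : 0 < t :=
    mul_pos (Real.sqrt_pos.mpr hs) (Real.log_pos (by exact_mod_cast hj))
  have hbound := gammaMeasure_Iic_le_rpow_mul_exp (a := j) (R' := 2 * r + 1 / t) (by positivity)
    (by positivity : 0 ≤ 2 * r) (by simp [ht.le]) (by positivity) t
  have htilt : (2 * r / (2 * r + 1 / t)) ^ (j : ℝ) * Real.exp ((2 * r + 1 / t - 2 * r) * t)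
      = Real.exp 1 * ((1 + 1 / (2 * r * Real.sqrt s * Real.log j)) ^ j)⁻¹ := by
    rw [Real.rpow_natCast, show (2 * r + 1 / t - 2 * r) * t = 1 by field_simp; ring,
      show 2 * r * Real.sqrt s * Real.log j = 2 * r * t by ring, ← inv_pow, mul_comm]
    congr 2
    field_simp
  calc μ {ω | γ ω ≤ t} = gammaMeasure j (2 * r) (Set.Iic t) := by
        rw [← hγd, Measure.map_apply hγ measurableSet_Iic]; rfl
    _ ≤ _ := htilt ▸ hbound
end

section
/- Let s > 0 and λ > 0. For each integer j ≥ 2, let X_j be a real random variable with the centered Gaussian distribution of variance s and let γ_j be an independent random variable with the Gamma distribution of shape j and rate 2λ. Then ∑_{j=2}^∞ P(X_j ≥ γ_j) ≤ 100 λ² s + λ√s. -/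
/-!
Write `β = 2λ`. Conditioning on `X_j`, `P(γ_j ≤ X_j) = E[F_j(X_j)]` with `F_j` the Gamma(`j`, `β`)
distribution function. For an integer shape the Gamma density of shape `n + 1` at `t ≥ 0` is `β`
times the Poisson(`βt`) weight of `n`, so the densities of all shapes `j ≥ 2` add up to
`β (1 - e^{-βt}) ≤ β² t`. Hence `∑_j F_j(x) ≤ β² x²`, and integrating against the Gaussian
bounds the series by `β² s = 4 λ² s`.
-/

open MeasureTheory ProbabilityTheory Real Set
open scoped ENNReal NNReal Nat

lemma tsum_subtype_le_eq_tsum_add {M : Type*} [AddCommMonoid M] [TopologicalSpace M]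
    (k : ℕ) (f : ℕ → M) : ∑' j : {j : ℕ // k ≤ j}, f j = ∑' n, f (n + k) := by
  refine (Function.Injective.tsum_eq (g := fun n : ℕ ↦ (⟨n + k, by omega⟩ : {j : ℕ // k ≤ j}))
    (fun a b h ↦ by simpa using h) ?_).symm
  rintro ⟨j, hj⟩ -
  exact ⟨j - k, Subtype.ext (Nat.sub_add_cancel hj)⟩

lemma ProbabilityTheory.IndepFun.measure_preimage_prod_eq_lintegral {Ω α β : Type*}
    {mΩ : MeasurableSpace Ω} {mα : MeasurableSpace α} {mβ : MeasurableSpace β}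
    {μ : Measure Ω} [IsFiniteMeasure μ]
    {X : Ω → α} {Y : Ω → β} (hX : Measurable X) (hY : Measurable Y) (hXY : IndepFun X Y μ)
    {S : Set (α × β)} (hS : MeasurableSet S) :
    μ ((fun ω ↦ (X ω, Y ω)) ⁻¹' S) = ∫⁻ x, μ.map Y (Prod.mk x ⁻¹' S) ∂μ.map X := by
  rw [← Measure.map_apply (hX.prodMk hY) hS,
    (indepFun_iff_map_prod_eq_prod_map_map hX.aemeasurable hY.aemeasurable).mp hXY,
    Measure.prod_apply hS]

lemma lintegral_sq_gaussianReal (v : ℝ≥0) :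
    ∫⁻ x, ENNReal.ofReal (x ^ 2) ∂gaussianReal 0 v = v := by
  have hvar := variance_eq_integral (X := id) measurable_id.aemeasurable (μ := gaussianReal 0 v)
  simp only [variance_id_gaussianReal, id, integral_id_gaussianReal, sub_zero] at hvar
  rw [← ofReal_integral_eq_lintegral_ofReal (f := fun x ↦ x ^ 2)
    (memLp_id_gaussianReal 2).integrable_sq
    (ae_of_all _ fun x ↦ sq_nonneg x), ← hvar, ENNReal.ofReal_coe_nnreal]

lemma gammaPDFReal_natCast_add_one (β : ℝ) {t : ℝ} (ht : 0 ≤ t) (n : ℕ) :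
    gammaPDFReal ((n + 1 : ℕ) : ℝ) β t = β * (exp (-(β * t)) * (β * t) ^ n / n !) := by
  rw [gammaPDFReal, if_pos ht, Real.rpow_natCast, Nat.cast_add_one, Real.Gamma_nat_eq_factorial,
    add_sub_cancel_right, Real.rpow_natCast]
  ring

lemma hasSum_gammaPDFReal_natCast_add_two (β : ℝ) {t : ℝ} (ht : 0 ≤ t) :
    HasSum (fun n : ℕ ↦ gammaPDFReal ((n + 2 : ℕ) : ℝ) β t) (β * (1 - exp (-(β * t)))) := by
  have hpoisson : HasSum (fun n : ℕ ↦ exp (-(β * t)) * (β * t) ^ n / n !) 1 := by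
    have h := (NormedSpace.expSeries_div_hasSum_exp (β * t)).mul_left (exp (-(β * t)))
    rw [← exp_eq_exp_ℝ, ← exp_add, neg_add_cancel, exp_zero] at h
    simpa only [mul_div_assoc] using h
  have htail := (hasSum_nat_add_iff' 1).mpr hpoisson
  simp only [Finset.range_one, Finset.sum_singleton, pow_zero, Nat.factorial_zero,
    Nat.cast_one, div_one, mul_one] at htail
  simpa only [gammaPDFReal_natCast_add_one β ht] using htail.mul_left β

lemma tsum_gammaPDF_le {β t : ℝ} (hβ : 0 < β) (ht : 0 ≤ t) :
    ∑' j : {j : ℕ // 2 ≤ j}, gammaPDF (j : ℝ) β t ≤ ENNReal.ofReal (β ^ 2 * t) := by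
  have hsum := hasSum_gammaPDFReal_natCast_add_two β ht
  rw [tsum_subtype_le_eq_tsum_add 2 fun j ↦ gammaPDF (j : ℝ) β t]
  simp only [gammaPDF]
  rw [← ENNReal.ofReal_tsum_of_nonneg (fun n ↦ gammaPDFReal_nonneg (by positivity) hβ t)
    hsum.summable, hsum.tsum_eq]
  refine ENNReal.ofReal_le_ofReal ?_
  rw [sq, mul_assoc]
  exact mul_le_mul_of_nonneg_left (by linarith [add_one_le_exp (-(β * t))]) hβ.le

lemma gammaMeasure_Iic_eq_setLIntegral_Icc (a r x : ℝ) :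
    gammaMeasure a r (Iic x) = ∫⁻ t in Icc 0 x, gammaPDF a r t := by
  rw [gammaMeasure, withDensity_apply _ measurableSet_Iic]
  rcases le_or_gt 0 x with hx | hx
  · rw [lintegral_Iic_eq_lintegral_Iio_add_Icc _ hx, lintegral_gammaPDF_of_nonpos le_rfl, zero_add]
  · rw [Icc_eq_empty hx.not_ge, Measure.restrict_empty, lintegral_zero_measure]
    exact setLIntegral_eq_zero measurableSet_Iic fun t ht ↦ gammaPDF_of_neg (lt_of_le_of_lt ht hx)

lemma tsum_gammaMeasure_Iic_le {β : ℝ} (hβ : 0 < β) (x : ℝ) :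
    ∑' j : {j : ℕ // 2 ≤ j}, gammaMeasure (j : ℝ) β (Iic x) ≤ ENNReal.ofReal (β ^ 2 * x ^ 2) := by
  simp_rw [gammaMeasure_Iic_eq_setLIntegral_Icc]
  rw [← lintegral_tsum (f := fun (j : {j : ℕ // 2 ≤ j}) t ↦ gammaPDF (j : ℝ) β t)
    fun j ↦ (measurable_gammaPDFReal _ _).ennreal_ofReal.aemeasurable]
  calc ∫⁻ t in Icc 0 x, ∑' j : {j : ℕ // 2 ≤ j}, gammaPDF (j : ℝ) β t
      ≤ ∫⁻ _ in Icc 0 x, ENNReal.ofReal (β ^ 2 * x) :=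
        setLIntegral_mono measurable_const fun t ht ↦
          (tsum_gammaPDF_le hβ ht.1).trans (by gcongr; exact ht.2)
    _ = ENNReal.ofReal (β ^ 2 * x) * ENNReal.ofReal x := by
        rw [setLIntegral_const, Real.volume_Icc, sub_zero]
    _ ≤ ENNReal.ofReal (β ^ 2 * x ^ 2) := by
        rcases le_or_gt 0 x with hx | hx
        · rw [← ENNReal.ofReal_mul (by positivity), mul_assoc, ← sq]
        · simp [ENNReal.ofReal_of_nonpos hx.le]

theorem stmt18_general
    {Ω : Type*} {m0 : MeasurableSpace Ω} {μ : Measure Ω} [IsProbabilityMeasure μ]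
    (s : ℝ≥0) (r : ℝ) (hr : 0 < r)
    (X γ : ℕ → Ω → ℝ)
    (hX : ∀ j, 2 ≤ j → Measurable (X j)) (hγ : ∀ j, 2 ≤ j → Measurable (γ j))
    (hXd : ∀ j, 2 ≤ j → Measure.map (X j) μ = gaussianReal 0 s)
    (hγd : ∀ j, 2 ≤ j → Measure.map (γ j) μ = gammaMeasure (j : ℝ) (2 * r))
    (hind : ∀ j, 2 ≤ j → IndepFun (X j) (γ j) μ) :
    ∑' j : {j : ℕ // 2 ≤ j}, μ {ω | γ (j : ℕ) ω ≤ X (j : ℕ) ω} ≤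
      ENNReal.ofReal (100 * r ^ 2 * s + r * Real.sqrt s) := by
  have hβ : 0 < 2 * r := by positivity
  have hlaw (j : {j : ℕ // 2 ≤ j}) : μ {ω | γ j ω ≤ X j ω} =
      ∫⁻ x, gammaMeasure (j : ℝ) (2 * r) (Iic x) ∂gaussianReal 0 s := by
    have h := (hind j j.2).measure_preimage_prod_eq_lintegral (hX j j.2) (hγ j j.2)
      (measurableSet_le measurable_snd measurable_fst)
    rwa [hXd j j.2, hγd j j.2] at h
  calc ∑' j : {j : ℕ // 2 ≤ j}, μ {ω | γ j ω ≤ X j ω}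
      = ∫⁻ x, ∑' j : {j : ℕ // 2 ≤ j}, gammaMeasure (j : ℝ) (2 * r) (Iic x)
          ∂gaussianReal 0 s := by
        rw [tsum_congr hlaw, lintegral_tsum fun j ↦ (Monotone.measurable fun a b hab ↦
          measure_mono (Iic_subset_Iic.mpr hab)).aemeasurable]
    _ ≤ ∫⁻ x, ENNReal.ofReal ((2 * r) ^ 2) * ENNReal.ofReal (x ^ 2) ∂gaussianReal 0 s :=
        lintegral_mono fun x ↦
          (tsum_gammaMeasure_Iic_le hβ x).trans_eq (ENNReal.ofReal_mul (by positivity))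
    _ = ENNReal.ofReal ((2 * r) ^ 2 * s) := by
        rw [lintegral_const_mul _ (by fun_prop), lintegral_sq_gaussianReal,
          ← ENNReal.ofReal_coe_nnreal, ← ENNReal.ofReal_mul (by positivity)]
    _ ≤ ENNReal.ofReal (100 * r ^ 2 * s + r * Real.sqrt s) := by
        gcongr
        nlinarith [mul_nonneg (sq_nonneg r) s.2, mul_nonneg hr.le (Real.sqrt_nonneg s)]

/-- For each integer `j ≥ 2`, let `X_j` be a centered Gaussian random
variable of variance `s > 0` and `γ_j` an independent Gamma(`j`, `2λ`) random variable
(`λ > 0`); no joint independence across different `j` is assumed. Then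
`∑_{j≥2} P(X_j ≥ γ_j) ≤ 100 λ² s + λ √s`. -/
theorem stmt18
    {Ω : Type*} {m0 : MeasurableSpace Ω} {μ : Measure Ω} [IsProbabilityMeasure μ]
    (s : ℝ≥0) (hs : 0 < s) (r : ℝ) (hr : 0 < r)
    (X γ : ℕ → Ω → ℝ)
    (hX : ∀ j, 2 ≤ j → Measurable (X j)) (hγ : ∀ j, 2 ≤ j → Measurable (γ j))
    (hXd : ∀ j, 2 ≤ j → Measure.map (X j) μ = gaussianReal 0 s)
    (hγd : ∀ j, 2 ≤ j → Measure.map (γ j) μ = gammaMeasure (j : ℝ) (2 * r))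
    (hind : ∀ j, 2 ≤ j → IndepFun (X j) (γ j) μ) :
    ∑' j : {j : ℕ // 2 ≤ j}, μ {ω | γ (j : ℕ) ω ≤ X (j : ℕ) ω} ≤
      ENNReal.ofReal (100 * r ^ 2 * s + r * Real.sqrt s) :=
  stmt18_general (m0 := m0) s r hr X γ hX hγ hXd hγd hind
end
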